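/- arXiv:1511.01320 — 7 statements merged into one kernel-verified Lean document; each statement's English description precedes it below -/
import Mathlib

section
/- Let (X,T) be a minimal Cantor system and U ⊆ X a nonempty clopen set. The map F from the space M(X,T) of T-invariant Borel probability measures on X to the space M(U,T_U) of T_U-invariant Borel probability measures on U, defined by F(μ)(B) = μ(B)/μ(U) for Borel B ⊆ U, is well-defined and bijective. -/
/-!
By compactness and minimality every point enters `U` within a bounded time `N`. Over `U` stand the
floors of the Kakutani tower: the points of `U` whose first return comes after time `k`, pushed
forward `k + 1` steps. Applying invariance and splitting off `U` repeatedly gives Kac's formula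
`μ A = ∑ₖ μ (U ∩ {r > k} ∩ T⁻⁽ᵏ⁺¹⁾ A)`, so an invariant `μ` is the tower over its restriction to
`U`; in particular `μ U ≠ 0`, and the same decomposition of a subset of `U` by return time shows
that the restriction is `T_U`-invariant. Conversely the tower over a `T_U`-invariant measure on
`U` is finite and `T`-invariant. After normalisation the two constructions are mutually inverse.
-/

open Set MeasureTheory

/-- Return time function `r_A(x) = inf {n > 0 : Tⁿ x ∈ A}`. -/
noncomputable def retTime {α : Type*} (T : α → α) (A : Set α) (x : α) : ℕ :=
  sInf {n : ℕ | 0 < n ∧ T^[n] x ∈ A}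

/-- Minimality: every (two-sided) orbit is dense. -/
def IsMinimalHomeo {X : Type*} [TopologicalSpace X] (T : X ≃ₜ X) : Prop :=
  ∀ x : X, Dense {y : X | ∃ n : ℤ, (T.toEquiv ^ n) x = y}

/-- The space of `T`-invariant Borel probability measures. -/
def InvProb {α : Type*} [MeasurableSpace α] (T : α → α) : Type _ :=
  {μ : Measure α // IsProbabilityMeasure μ ∧ ∀ s, MeasurableSet s → μ (T ⁻¹' s) = μ s}

open Function
open scoped ENNReal

section FirstReturn

variable {α : Type*} {T : α → α} {U : Set α} {x : α} {n : ℕ}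

def avoidSet (T : α → α) (U : Set α) (K : ℕ) : Set α :=
  {x | ∀ j < K, T^[j] x ∉ U}

def returnsAfter (T : α → α) (U : Set α) (k : ℕ) : Set α :=
  U ∩ T ⁻¹' avoidSet T U k

noncomputable def firstReturnMap (T : α → α) (U : Set α) (x : α) : α :=
  T^[retTime T U x] x

lemma retTime_spec (h : ∃ n, 0 < n ∧ T^[n] x ∈ U) :
    0 < retTime T U x ∧ T^[retTime T U x] x ∈ U :=
  Nat.sInf_mem h

lemma retTime_le (hn : 0 < n) (hx : T^[n] x ∈ U) : retTime T U x ≤ n :=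
  Nat.sInf_le ⟨hn, hx⟩

lemma iterate_retTime_mem_of_pos (h : 0 < retTime T U x) : T^[retTime T U x] x ∈ U :=
  (Nat.sInf_mem (Nat.nonempty_of_pos_sInf h)).2

lemma iterate_notMem_of_lt_retTime (hn : 0 < n) (h : n < retTime T U x) : T^[n] x ∉ U :=
  fun hx => (retTime_le hn hx).not_gt h

lemma avoidSet_zero : avoidSet T U 0 = univ := by
  simp [avoidSet]

lemma avoidSet_succ (K : ℕ) : avoidSet T U (K + 1) = Uᶜ ∩ T ⁻¹' avoidSet T U K := by
  ext x
  simp only [avoidSet, mem_ofPred_eq, mem_inter_iff, mem_compl_iff, mem_preimage,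
    Nat.forall_lt_succ_left, iterate_zero_apply, iterate_succ_apply]

lemma avoidSet_succ' (K : ℕ) : avoidSet T U (K + 1) = avoidSet T U K ∩ T^[K] ⁻¹' Uᶜ := by
  ext x
  simp only [avoidSet, mem_ofPred_eq, mem_inter_iff, mem_compl_iff, mem_preimage,
    Nat.forall_lt_succ_right]

lemma avoidSet_eq_empty {N K : ℕ} (hhit : ∀ x, ∃ n ≤ N, T^[n] x ∈ U) (hK : N < K) :
    avoidSet T U K = ∅ :=
  eq_empty_of_forall_notMem fun x hx =>
    let ⟨n, hn, hxn⟩ := hhit x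
    hx n (hn.trans_lt hK) hxn

lemma returnsAfter_zero : returnsAfter T U 0 = U := by
  simp [returnsAfter, avoidSet_zero]

lemma returnsAfter_succ (k : ℕ) :
    returnsAfter T U (k + 1) = returnsAfter T U k ∩ T^[k + 1] ⁻¹' Uᶜ := by
  rw [returnsAfter, returnsAfter, avoidSet_succ', preimage_inter, ← inter_assoc,
    iterate_succ, preimage_comp]

lemma returnsAfter_eq_empty {N k : ℕ} (hhit : ∀ x, ∃ n ≤ N, T^[n] x ∈ U) (hk : N < k) :
    returnsAfter T U k = ∅ := by
  rw [returnsAfter, avoidSet_eq_empty hhit hk, preimage_empty, inter_empty]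

lemma mem_returnsAfter_and_iterate_mem_iff {k : ℕ} :
    x ∈ returnsAfter T U k ∧ T^[k + 1] x ∈ U ↔ x ∈ U ∧ retTime T U x = k + 1 := by
  have hS : x ∈ returnsAfter T U k ↔ x ∈ U ∧ ∀ j < k, T^[j + 1] x ∉ U := by
    simp [returnsAfter, avoidSet]
  rw [hS]
  constructor
  · rintro ⟨⟨hx, hk⟩, hxk⟩
    refine ⟨hx, (retTime_le k.succ_pos hxk).antisymm (not_lt.1 fun hlt => ?_)⟩
    obtain ⟨hpos, hmem⟩ := retTime_spec ⟨k + 1, k.succ_pos, hxk⟩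
    exact hk (retTime T U x - 1) (by omega) (by rwa [Nat.sub_add_cancel hpos])
  · rintro ⟨hx, hr⟩
    refine ⟨⟨hx, fun j hj => iterate_notMem_of_lt_retTime j.succ_pos (by omega)⟩, ?_⟩
    exact hr ▸ iterate_retTime_mem_of_pos (hr ▸ k.succ_pos)

lemma iUnion_returnsAfter_inter_preimage (hret : ∀ x ∈ U, ∃ n, 0 < n ∧ T^[n] x ∈ U)
    {V : Set α} (hVU : V ⊆ U) :
    ⋃ k, returnsAfter T U k ∩ T^[k + 1] ⁻¹' V = U ∩ firstReturnMap T U ⁻¹' V := by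
  ext x
  simp only [mem_iUnion, mem_inter_iff, mem_preimage, firstReturnMap]
  constructor
  · rintro ⟨k, hk, hV⟩
    obtain ⟨hx, hr⟩ := mem_returnsAfter_and_iterate_mem_iff.1 ⟨hk, hVU hV⟩
    exact ⟨hx, hr ▸ hV⟩
  · rintro ⟨hx, hV⟩
    have hr : retTime T U x = retTime T U x - 1 + 1 :=
      (Nat.sub_add_cancel (retTime_spec (hret x hx)).1).symm
    refine ⟨retTime T U x - 1, (mem_returnsAfter_and_iterate_mem_iff.2 ⟨hx, hr⟩).1, ?_⟩
    rwa [← hr]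

lemma pairwise_disjoint_returnsAfter_inter_preimage {V : Set α} (hVU : V ⊆ U) :
    Pairwise (Disjoint on fun k => returnsAfter T U k ∩ T^[k + 1] ⁻¹' V) := by
  intro k l hkl
  refine disjoint_left.2 fun x hk hl => hkl ?_
  have hrk := (mem_returnsAfter_and_iterate_mem_iff.1 ⟨hk.1, hVU hk.2⟩).2
  have hrl := (mem_returnsAfter_and_iterate_mem_iff.1 ⟨hl.1, hVU hl.2⟩).2
  omega

lemma image_preimage_eq_inter_preimage_firstReturnMap
    {TU : U → U} (hTU : ∀ x : U, (TU x : α) = firstReturnMap T U x) (B : Set U) :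
    Subtype.val '' (TU ⁻¹' B) = U ∩ firstReturnMap T U ⁻¹' (Subtype.val '' B) := by
  ext x
  constructor
  · rintro ⟨u, hu, rfl⟩
    exact ⟨u.2, TU u, hu, hTU u⟩
  · rintro ⟨hx, v, hv, hvx⟩
    refine ⟨⟨x, hx⟩, ?_, rfl⟩
    rwa [mem_preimage, show TU ⟨x, hx⟩ = v from Subtype.ext ((hTU _).trans hvx.symm)]

end FirstReturn

section KakutaniTower

variable {α : Type*} [MeasurableSpace α] {T : α → α} {U : Set α} {N : ℕ}

noncomputable def kakutaniTower (T : α → α) (U : Set α) (m : Measure α) : Measure α :=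
  Measure.sum fun k => (m.restrict (returnsAfter T U k)).map T^[k + 1]

lemma measurableSet_avoidSet (hT : Measurable T) (hU : MeasurableSet U) (K : ℕ) :
    MeasurableSet (avoidSet T U K) := by
  induction K with
  | zero => simp [avoidSet_zero]
  | succ K ih => rw [avoidSet_succ]; exact hU.compl.inter (hT ih)

lemma measurableSet_returnsAfter (hT : Measurable T) (hU : MeasurableSet U) (k : ℕ) :
    MeasurableSet (returnsAfter T U k) :=
  hU.inter (hT (measurableSet_avoidSet hT hU k))

lemma tsum_measure_returnsAfter_inter (hhit : ∀ x, ∃ n ≤ N, T^[n] x ∈ U) (m : Measure α)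
    (B : ℕ → Set α) :
    ∑' k, m (returnsAfter T U k ∩ B k) = ∑ k ∈ Finset.range (N + 1), m (returnsAfter T U k ∩ B k) :=
  tsum_eq_sum fun k hk => by
    rw [returnsAfter_eq_empty hhit (by simp at hk; omega), empty_inter, measure_empty]

lemma measure_eq_sum_add_avoidSet {μ : Measure α} (hμ : MeasurePreserving T μ μ)
    (hU : MeasurableSet U) {A : Set α} (hA : MeasurableSet A) (K : ℕ) :
    μ A = ∑ k ∈ Finset.range K, μ (returnsAfter T U k ∩ T^[k + 1] ⁻¹' A)
      + μ (avoidSet T U K ∩ T^[K] ⁻¹' A) := by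
  induction K with
  | zero => simp [avoidSet_zero]
  | succ K ih =>
    have hT := hμ.measurable
    have hs : MeasurableSet (avoidSet T U K ∩ T^[K] ⁻¹' A) :=
      (measurableSet_avoidSet hT hU K).inter (hT.iterate K hA)
    have hsplit : μ (avoidSet T U K ∩ T^[K] ⁻¹' A) =
        μ (returnsAfter T U K ∩ T^[K + 1] ⁻¹' A) + μ (avoidSet T U (K + 1) ∩ T^[K + 1] ⁻¹' A) := by
      rw [← hμ.measure_preimage hs.nullMeasurableSet, ← measure_inter_add_sdiff _ hU]
      congr 2 <;> ext x <;>
        simp [returnsAfter, avoidSet_succ] <;> tauto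
    rw [ih, hsplit, Finset.sum_range_succ, add_assoc]

lemma kakutaniTower_apply (hT : Measurable T) (m : Measure α) {A : Set α} (hA : MeasurableSet A) :
    kakutaniTower T U m A = ∑' k, m (returnsAfter T U k ∩ T^[k + 1] ⁻¹' A) := by
  simp only [kakutaniTower, Measure.sum_apply _ hA, Measure.map_apply (hT.iterate _) hA,
    Measure.restrict_apply (hT.iterate _ hA), inter_comm]

lemma kakutaniTower_smul (hT : Measurable T) (c : ℝ≥0∞) (m : Measure α) :
    kakutaniTower T U (c • m) = c • kakutaniTower T U m := by
  ext A hA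
  simp only [Measure.smul_apply, kakutaniTower_apply hT _ hA, smul_eq_mul, ENNReal.tsum_mul_left]

theorem kakutaniTower_restrict {μ : Measure α} (hμ : MeasurePreserving T μ μ)
    (hU : MeasurableSet U) (hhit : ∀ x, ∃ n ≤ N, T^[n] x ∈ U) :
    kakutaniTower T U (μ.restrict U) = μ := by
  ext A hA
  rw [kakutaniTower_apply hμ.measurable _ hA, tsum_measure_returnsAfter_inter hhit,
    measure_eq_sum_add_avoidSet hμ hU hA (N + 1), avoidSet_eq_empty hhit N.lt_succ_self,
    empty_inter, measure_empty, add_zero]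
  refine Finset.sum_congr rfl fun k _ => ?_
  rw [Measure.restrict_apply' hU, inter_eq_left.2 fun x hx => hx.1.1]

lemma kakutaniTower_apply_of_subset (hT : Measurable T) (hU : MeasurableSet U)
    (hret : ∀ x ∈ U, ∃ n, 0 < n ∧ T^[n] x ∈ U) (m : Measure α) {V : Set α}
    (hV : MeasurableSet V) (hVU : V ⊆ U) :
    kakutaniTower T U m V = m (U ∩ firstReturnMap T U ⁻¹' V) := by
  rw [kakutaniTower_apply hT m hV, ← iUnion_returnsAfter_inter_preimage hret hVU,
    measure_iUnion (pairwise_disjoint_returnsAfter_inter_preimage hVU)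
      fun k => (measurableSet_returnsAfter hT hU k).inter (hT.iterate _ hV)]

theorem measure_inter_preimage_firstReturnMap {μ : Measure α} (hμ : MeasurePreserving T μ μ)
    (hU : MeasurableSet U) (hhit : ∀ x, ∃ n ≤ N, T^[n] x ∈ U)
    (hret : ∀ x ∈ U, ∃ n, 0 < n ∧ T^[n] x ∈ U) {V : Set α} (hV : MeasurableSet V) (hVU : V ⊆ U) :
    μ (U ∩ firstReturnMap T U ⁻¹' V) = μ V := by
  conv_rhs => rw [← kakutaniTower_restrict hμ hU hhit]
  rw [kakutaniTower_apply_of_subset hμ.measurable hU hret _ hV hVU, Measure.restrict_apply' hU,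
    inter_eq_left.2 inter_subset_left]

lemma measure_ne_zero_of_measurePreserving {μ : Measure α} (hμ : MeasurePreserving T μ μ)
    (hU : MeasurableSet U) (hhit : ∀ x, ∃ n ≤ N, T^[n] x ∈ U) (hμ0 : μ ≠ 0) : μ U ≠ 0 := by
  intro h
  apply hμ0
  rw [← kakutaniTower_restrict hμ hU hhit, Measure.restrict_eq_zero.2 h]
  simp [kakutaniTower]

theorem measurePreserving_kakutaniTower (hT : Measurable T) (hU : MeasurableSet U)
    (hret : ∀ x ∈ U, ∃ n, 0 < n ∧ T^[n] x ∈ U) {m : Measure α}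
    (hm : ∀ V, MeasurableSet V → V ⊆ U → m (U ∩ firstReturnMap T U ⁻¹' V) = m V) :
    MeasurePreserving T (kakutaniTower T U m) (kakutaniTower T U m) := by
  refine ⟨hT, Measure.ext fun A hA => ?_⟩
  have hUA : MeasurableSet (U ∩ T ⁻¹' A) := hU.inter (hT hA)
  set f : ℕ → ℝ≥0∞ := fun k => m (returnsAfter T U k ∩ T^[k + 1] ⁻¹' A)
  -- from floor `k` a point either climbs to floor `k + 1` or returns to `U`, where `hm` puts it
  -- back on floor `0`
  have hlevel : ∀ k, m (returnsAfter T U k ∩ T^[k + 1] ⁻¹' (T ⁻¹' A)) =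
      f (k + 1) + m (returnsAfter T U k ∩ T^[k + 1] ⁻¹' (U ∩ T ⁻¹' A)) := by
    intro k
    rw [← measure_inter_add_sdiff _ (hT.iterate (k + 1) hU), add_comm]
    congr 2 <;> ext x <;>
      simp only [mem_inter_iff, mem_sdiff, mem_preimage, mem_compl_iff, returnsAfter_succ,
        ← iterate_succ_apply' T] <;> tauto
  have hbase : kakutaniTower T U m (U ∩ T ⁻¹' A) = f 0 := by
    rw [kakutaniTower_apply_of_subset hT hU hret m hUA inter_subset_left,
      hm _ hUA inter_subset_left]
    simp [f, returnsAfter_zero]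
  rw [Measure.map_apply hT hA]
  calc kakutaniTower T U m (T ⁻¹' A)
      = ∑' k, f (k + 1) + kakutaniTower T U m (U ∩ T ⁻¹' A) := by
        rw [kakutaniTower_apply hT m (hT hA), kakutaniTower_apply hT m hUA, ← ENNReal.tsum_add]
        exact tsum_congr hlevel
    _ = kakutaniTower T U m A := by
        rw [hbase, add_comm, ← tsum_eq_zero_add' ENNReal.summable, kakutaniTower_apply hT m hA]

lemma isFiniteMeasure_kakutaniTower (hT : Measurable T) (hhit : ∀ x, ∃ n ≤ N, T^[n] x ∈ U)
    (m : Measure α) [IsFiniteMeasure m] : IsFiniteMeasure (kakutaniTower T U m) := by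
  refine ⟨?_⟩
  rw [kakutaniTower_apply hT m .univ, tsum_measure_returnsAfter_inter hhit]
  exact ENNReal.sum_lt_top.2 fun k _ => measure_lt_top _ _

end KakutaniTower

section InducedMeasure

variable {α : Type*} [MeasurableSpace α] {U : Set α}

noncomputable def inducedMeasure (μ : Measure α) (U : Set α) : Measure U :=
  (μ U)⁻¹ • μ.comap Subtype.val

lemma inducedMeasure_apply (hU : MeasurableSet U) (μ : Measure α) (B : Set U) :
    inducedMeasure μ U B = μ (Subtype.val '' B) / μ U := by
  rw [inducedMeasure, Measure.smul_apply, (MeasurableEmbedding.subtype_coe hU).comap_apply,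
    smul_eq_mul, div_eq_mul_inv, mul_comm]

lemma isProbabilityMeasure_inducedMeasure (hU : MeasurableSet U) {μ : Measure α}
    [IsFiniteMeasure μ] (hμU : μ U ≠ 0) : IsProbabilityMeasure (inducedMeasure μ U) :=
  ⟨by rw [inducedMeasure_apply hU, image_univ, Subtype.range_coe,
    ENNReal.div_self hμU (measure_ne_top μ U)]⟩

lemma map_val_inducedMeasure (hU : MeasurableSet U) (μ : Measure α) :
    (inducedMeasure μ U).map Subtype.val = (μ U)⁻¹ • μ.restrict U := by
  rw [inducedMeasure, Measure.map_smul, (MeasurableEmbedding.subtype_coe hU).map_comap,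
    Subtype.range_coe]

lemma inducedMeasure_map_val (hU : MeasurableSet U) (ν : Measure U) [IsProbabilityMeasure ν] :
    inducedMeasure (ν.map Subtype.val) U = ν := by
  have hval := MeasurableEmbedding.subtype_coe hU
  ext B hB
  rw [inducedMeasure_apply hU, hval.map_apply, hval.map_apply,
    preimage_image_eq _ Subtype.val_injective, Subtype.coe_preimage_self, measure_univ, div_one]

lemma inducedMeasure_eq_of_forall_subset {μ ν : Measure α} {c : ℝ≥0∞} (hc0 : c ≠ 0) (hc : c ≠ ⊤)
    (hU : MeasurableSet U) (h : ∀ V, MeasurableSet V → V ⊆ U → μ V = c * ν V) :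
    inducedMeasure μ U = inducedMeasure ν U := by
  ext B hB
  rw [inducedMeasure_apply hU, inducedMeasure_apply hU,
    h _ (hU.subtype_image hB) (Subtype.coe_image_subset U B), h U hU subset_rfl,
    ENNReal.mul_div_mul_left _ _ hc0 hc]

end InducedMeasure

section InducedSystem

variable {α : Type*} [MeasurableSpace α] {T : α → α} {U : Set α} {N : ℕ} {TU : U → U}

theorem isInvariantProb_inducedMeasure {μ : Measure α} [IsProbabilityMeasure μ]
    (hμ : MeasurePreserving T μ μ) (hU : MeasurableSet U) (hhit : ∀ x, ∃ n ≤ N, T^[n] x ∈ U)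
    (hret : ∀ x ∈ U, ∃ n, 0 < n ∧ T^[n] x ∈ U) (hTU : ∀ x : U, (TU x : α) = firstReturnMap T U x) :
    IsProbabilityMeasure (inducedMeasure μ U) ∧
      ∀ s, MeasurableSet s → inducedMeasure μ U (TU ⁻¹' s) = inducedMeasure μ U s := by
  refine ⟨isProbabilityMeasure_inducedMeasure hU
    (measure_ne_zero_of_measurePreserving hμ hU hhit (IsProbabilityMeasure.ne_zero μ)),
    fun B hB => ?_⟩
  rw [inducedMeasure_apply hU, inducedMeasure_apply hU,
    image_preimage_eq_inter_preimage_firstReturnMap hTU,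
    measure_inter_preimage_firstReturnMap hμ hU hhit hret (hU.subtype_image hB)
      (Subtype.coe_image_subset U B)]

lemma kakutaniTower_map_val_of_subset (hT : Measurable T) (hU : MeasurableSet U)
    (hret : ∀ x ∈ U, ∃ n, 0 < n ∧ T^[n] x ∈ U) (hTU : ∀ x : U, (TU x : α) = firstReturnMap T U x)
    {ν : Measure U} (hν : ∀ s, MeasurableSet s → ν (TU ⁻¹' s) = ν s) {V : Set α}
    (hV : MeasurableSet V) (hVU : V ⊆ U) :
    kakutaniTower T U (ν.map Subtype.val) V = ν (Subtype.val ⁻¹' V) := by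
  have hval := MeasurableEmbedding.subtype_coe hU
  have hV' : Subtype.val '' (Subtype.val ⁻¹' V : Set U) = V :=
    image_preimage_eq_of_subset (by rwa [Subtype.range_coe])
  rw [kakutaniTower_apply_of_subset hT hU hret _ hV hVU, hval.map_apply]
  conv_lhs => rw [← hV', ← image_preimage_eq_inter_preimage_firstReturnMap hTU,
    preimage_image_eq _ Subtype.val_injective]
  exact hν _ (measurable_subtype_coe hV)

lemma kakutaniTower_map_val_apply_self (hT : Measurable T) (hU : MeasurableSet U)
    (hret : ∀ x ∈ U, ∃ n, 0 < n ∧ T^[n] x ∈ U) (hTU : ∀ x : U, (TU x : α) = firstReturnMap T U x)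
    {ν : Measure U} [IsProbabilityMeasure ν] (hν : ∀ s, MeasurableSet s → ν (TU ⁻¹' s) = ν s) :
    kakutaniTower T U (ν.map Subtype.val) U = 1 := by
  rw [kakutaniTower_map_val_of_subset hT hU hret hTU hν hU subset_rfl, Subtype.coe_preimage_self,
    measure_univ]

noncomputable def normalizedTower (T : α → α) (U : Set α) (ν : Measure U) : Measure α :=
  (kakutaniTower T U (ν.map Subtype.val) univ)⁻¹ • kakutaniTower T U (ν.map Subtype.val)

theorem isInvariantProb_normalizedTower (hT : Measurable T) (hU : MeasurableSet U)
    (hhit : ∀ x, ∃ n ≤ N, T^[n] x ∈ U) (hret : ∀ x ∈ U, ∃ n, 0 < n ∧ T^[n] x ∈ U)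
    (hTU : ∀ x : U, (TU x : α) = firstReturnMap T U x) {ν : Measure U} [IsProbabilityMeasure ν]
    (hν : ∀ s, MeasurableSet s → ν (TU ⁻¹' s) = ν s) :
    IsProbabilityMeasure (normalizedTower T U ν) ∧
      ∀ s, MeasurableSet s → normalizedTower T U ν (T ⁻¹' s) = normalizedTower T U ν s := by
  have hm : ∀ V, MeasurableSet V → V ⊆ U →
      ν.map Subtype.val (U ∩ firstReturnMap T U ⁻¹' V) = ν.map Subtype.val V := by
    intro V hV hVU
    rw [← kakutaniTower_apply_of_subset hT hU hret _ hV hVU,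
      kakutaniTower_map_val_of_subset hT hU hret hTU hν hV hVU,
      (MeasurableEmbedding.subtype_coe hU).map_apply]
  have hρU := kakutaniTower_map_val_apply_self hT hU hret hTU hν
  have := isFiniteMeasure_kakutaniTower hT hhit (ν.map Subtype.val)
  have : NeZero (kakutaniTower T U (ν.map Subtype.val)) := ⟨fun h => by simp [h] at hρU⟩
  exact ⟨isProbabilityMeasureSMul, fun s hs =>
    ((measurePreserving_kakutaniTower hT hU hret hm).smul_measure _).measure_preimage
      hs.nullMeasurableSet⟩

theorem inducedMeasure_normalizedTower (hT : Measurable T) (hU : MeasurableSet U)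
    (hhit : ∀ x, ∃ n ≤ N, T^[n] x ∈ U) (hret : ∀ x ∈ U, ∃ n, 0 < n ∧ T^[n] x ∈ U)
    (hTU : ∀ x : U, (TU x : α) = firstReturnMap T U x) {ν : Measure U} [IsProbabilityMeasure ν]
    (hν : ∀ s, MeasurableSet s → ν (TU ⁻¹' s) = ν s) :
    inducedMeasure (normalizedTower T U ν) U = ν := by
  set ρ := kakutaniTower T U (ν.map Subtype.val)
  have := isFiniteMeasure_kakutaniTower hT hhit (ν.map Subtype.val)
  have hρ0 : ρ univ ≠ 0 := fun h => one_ne_zero <|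
    kakutaniTower_map_val_apply_self hT hU hret hTU hν ▸ measure_mono_null (subset_univ U) h
  conv_rhs => rw [← inducedMeasure_map_val hU ν]
  rw [normalizedTower]
  refine inducedMeasure_eq_of_forall_subset (ENNReal.inv_ne_zero.2 (measure_ne_top ρ univ))
    (ENNReal.inv_ne_top.2 hρ0) hU fun V hV hVU => ?_
  rw [Measure.smul_apply, smul_eq_mul, kakutaniTower_map_val_of_subset hT hU hret hTU hν hV hVU,
    (MeasurableEmbedding.subtype_coe hU).map_apply]

theorem normalizedTower_inducedMeasure {μ : Measure α} [IsProbabilityMeasure μ]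
    (hμ : MeasurePreserving T μ μ) (hU : MeasurableSet U) (hhit : ∀ x, ∃ n ≤ N, T^[n] x ∈ U) :
    normalizedTower T U (inducedMeasure μ U) = μ := by
  have hμU := measure_ne_zero_of_measurePreserving hμ hU hhit (IsProbabilityMeasure.ne_zero μ)
  have hρ : kakutaniTower T U ((inducedMeasure μ U).map Subtype.val) = (μ U)⁻¹ • μ := by
    rw [map_val_inducedMeasure hU, kakutaniTower_smul hμ.measurable,
      kakutaniTower_restrict hμ hU hhit]
  rw [normalizedTower, hρ, Measure.smul_apply, measure_univ, smul_eq_mul, mul_one, inv_inv,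
    smul_smul, ENNReal.mul_inv_cancel hμU (measure_ne_top μ U), one_smul]

end InducedSystem

lemma exists_bounded_return_of_isMinimalHomeo {X : Type*} [TopologicalSpace X] [CompactSpace X]
    {T : X ≃ₜ X} (hmin : IsMinimalHomeo T) {U : Set X} (hU : IsOpen U) (hne : U.Nonempty) :
    ∃ N, ∀ x, ∃ n, 0 < n ∧ n ≤ N ∧ T^[n] x ∈ U := by
  have hcont (n : ℤ) : Continuous ⇑(T.toEquiv ^ n) := by
    let toPerm : (X ≃ₜ X) →* Equiv.Perm X :=
      { toFun := Homeomorph.toEquiv, map_one' := rfl, map_mul' := fun _ _ => rfl }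
    rw [show T.toEquiv ^ n = toPerm (T ^ n) from (map_zpow toPerm T n).symm]
    exact (T ^ n).continuous
  have hcover : univ ⊆ ⋃ n : ℤ, ⇑(T.toEquiv ^ n) ⁻¹' U := fun x _ =>
    let ⟨_, ⟨n, hn⟩, hy⟩ := (hmin x).exists_mem_open hU hne
    mem_iUnion.2 ⟨n, by rwa [mem_preimage, hn]⟩
  obtain ⟨t, ht⟩ := isCompact_univ.elim_finite_subcover _ (fun n => hU.preimage (hcont n)) hcover
  set M := t.sup Int.natAbs
  refine ⟨2 * M + 1, fun x => ?_⟩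
  -- every point visits `U` within `M` steps in either direction, so apply this `M + 1` steps ahead
  obtain ⟨n, hnt, hn⟩ := mem_iUnion₂.1 (ht (mem_univ ((T.toEquiv ^ ((M : ℤ) + 1)) x)))
  have hnM : n.natAbs ≤ M := Finset.le_sup hnt
  have hk : ((n + M + 1).toNat : ℤ) = n + (M + 1) := by omega
  refine ⟨(n + M + 1).toNat, by omega, by omega, ?_⟩
  have hiter : T^[(n + M + 1).toNat] x = (T.toEquiv ^ (n + (M + 1))) x := by
    rw [← hk, zpow_natCast, ← Equiv.Perm.iterate_eq_pow]
    rfl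
  rwa [hiter, zpow_add, Equiv.Perm.mul_apply]

lemma InvProb.measurePreserving {α : Type*} [MeasurableSpace α] {T : α → α} (hT : Measurable T)
    (μ : InvProb T) : MeasurePreserving T μ.1 μ.1 :=
  ⟨hT, Measure.ext fun s hs => by rw [Measure.map_apply hT hs, μ.2.2 s hs]⟩

theorem stmt2_general {X : Type*} [MetricSpace X] [CompactSpace X]
    [MeasurableSpace X] [BorelSpace X]
    (T : X ≃ₜ X) (hmin : IsMinimalHomeo T)
    (U : Set X) (hU : IsClopen U) (hne : U.Nonempty)
    (TU : U → U) (hTU : ∀ x : U, (TU x : X) = (⇑T)^[retTime (⇑T) U (x : X)] (x : X)) :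
    ∃ F : InvProb (⇑T) → InvProb TU,
      (∀ (μ : InvProb (⇑T)) (B : Set U), MeasurableSet B →
        (F μ).1 B = μ.1 (Subtype.val '' B) / μ.1 U) ∧
      Function.Bijective F := by
  obtain ⟨N, hN⟩ := exists_bounded_return_of_isMinimalHomeo hmin hU.isOpen hne
  have hhit : ∀ x, ∃ n ≤ N, T^[n] x ∈ U := fun x => (hN x).imp fun _ h => h.2
  have hret : ∀ x ∈ U, ∃ n, 0 < n ∧ T^[n] x ∈ U := fun x _ => (hN x).imp fun _ h => ⟨h.1, h.2.2⟩
  have hUm : MeasurableSet U := hU.isOpen.measurableSet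
  have hT : Measurable T := T.continuous.measurable
  let F : InvProb T → InvProb TU := fun μ =>
    ⟨inducedMeasure μ.1 U, by
      have := μ.2.1
      exact isInvariantProb_inducedMeasure (μ.measurePreserving hT) hUm hhit hret hTU⟩
  let G : InvProb TU → InvProb T := fun ν =>
    ⟨normalizedTower T U ν.1, by
      have := ν.2.1
      exact isInvariantProb_normalizedTower hT hUm hhit hret hTU ν.2.2⟩
  refine ⟨F, fun μ B _ => inducedMeasure_apply hUm μ.1 B,
    Function.bijective_iff_has_inverse.2 ⟨G, fun μ => Subtype.ext ?_, fun ν => Subtype.ext ?_⟩⟩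
  · have := μ.2.1
    exact normalizedTower_inducedMeasure (μ.measurePreserving hT) hUm hhit
  · have := ν.2.1
    exact inducedMeasure_normalizedTower hT hUm hhit hret hTU ν.2.2

theorem stmt2 {X : Type*} [MetricSpace X] [CompactSpace X]
    [TotallyDisconnectedSpace X] [PerfectSpace X]
    [MeasurableSpace X] [BorelSpace X]
    (T : X ≃ₜ X) (hmin : IsMinimalHomeo T)
    (U : Set X) (hU : IsClopen U) (hne : U.Nonempty)
    (TU : U → U) (hTU : ∀ x : U, (TU x : X) = (⇑T)^[retTime (⇑T) U (x : X)] (x : X)) :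
    ∃ F : InvProb (⇑T) → InvProb TU,
      (∀ (μ : InvProb (⇑T)) (B : Set U), MeasurableSet B →
        (F μ).1 B = μ.1 (Subtype.val '' B) / μ.1 U) ∧
      Function.Bijective F :=
  stmt2_general T hmin U hU hne TU hTU
end

section
/- Let (q_n)_{n≥1} be integers with q_n ≥ 2 and set p_n = q_1⋯q_n. The odometer (ℤ_{(q_n)}, R), where R is addition of 1, is self-induced if and only if there exists a prime q dividing infinitely many of the q_n, i.e., lim_n max{k : q^k divides p_n} = ∞. -/
open Set

/-- Partial products `p_n = q_1 ⋯ q_n` (indexed from 0: `pp q n = q 0 * ⋯ * q n`). -/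
def pp (q : ℕ → ℕ) (n : ℕ) : ℕ := ∏ i ∈ Finset.range (n + 1), q i

theorem pp_dvd (q : ℕ → ℕ) (n : ℕ) : pp q n ∣ pp q (n + 1) := by
  simp [pp, Finset.prod_range_succ]

instance (n : ℕ) : TopologicalSpace (ZMod n) := ⊥
instance (n : ℕ) : DiscreteTopology (ZMod n) := ⟨rfl⟩

/-- The `(q_n)`-adic integers: the inverse limit of the `ℤ/p_nℤ`. -/
abbrev Odo (q : ℕ → ℕ) : Type :=
  {x : ∀ n, ZMod (pp q n) // ∀ n, ZMod.castHom (pp_dvd q n) (ZMod (pp q n)) (x (n + 1)) = x n}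

/-- The odometer map: addition of `1`. -/
def odoR (q : ℕ → ℕ) : Odo q → Odo q :=
  fun x => ⟨fun n => x.1 n + 1, fun n => by rw [map_add, map_one, x.2 n]⟩

/-!
If a prime `ℓ` divides infinitely many `q n`, multiplication by `ℓ` is a homeomorphism of
`ℤ_(q_n)` onto the clopen set `ℓ ℤ_(q_n)`: it is injective because `ℓ * p_n ∣ p_m` for suitable
`m > n`, and onto by compactness. It conjugates `R` to `R^ℓ`, the first-return map to that set.

Conversely, let `φ` conjugate `R` to the first-return map on a proper clopen set `C`, which is
a union of `u < p_N` residue classes mod `p_N`, and pick a prime `ℓ` with `v_ℓ(u) < v_ℓ(p_N)`.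
If `ℓ` divided only finitely many `q n`, then `ℓ^E` with `E = max_n v_ℓ(p_n)` divides some
`p_n`, so the residue classes mod `ℓ^E` are clopen and cyclically permuted by `R`. Their images
under `φ` partition `C` and are cyclically permuted by the return map, which cannot increase
the number of level-`N'` cylinders a set meets; so `ℓ^E` divides the number `u p_{N'} / p_N`
of level-`N'` cylinders in `C`, which forces `v_ℓ(p_N) ≤ v_ℓ(u)`.
-/

open Function Topology Filter

theorem retTime_eq {α : Type*} {T : α → α} {A : Set α} {x : α} {k : ℕ} (hk : 0 < k)
    (hx : T^[k] x ∈ A) (hmin : ∀ t, 0 < t → t < k → T^[t] x ∉ A) : retTime T A x = k :=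
  le_antisymm (Nat.sInf_le ⟨hk, hx⟩)
    (le_csInf ⟨k, hk, hx⟩ fun t ⟨ht, htA⟩ => not_lt.1 fun hlt => hmin t ht hlt htA)

theorem IsClopen.image_of_isOpen_range {X Y : Type*} [TopologicalSpace X] [TopologicalSpace Y]
    [CompactSpace X] [T2Space Y] {φ : X → Y} (hφ : Continuous φ) (hinj : Injective φ)
    (hrange : IsOpen (Set.range φ)) {s : Set X} (hs : IsClopen s) : IsClopen (φ '' s) :=
  have he := hφ.isClosedEmbedding hinj
  ⟨he.isClosedMap s hs.1, (IsOpenEmbedding.mk he.isEmbedding hrange).isOpenMap s hs.2⟩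

theorem ZMod.castHom_eq_zero_of_natCast_mul_eq_zero {ℓ n m : ℕ} (hℓ : ℓ ≠ 0)
    (h : ℓ * n ∣ m) {a : ZMod m} (ha : (ℓ : ZMod m) * a = 0) :
    ZMod.castHom (dvd_of_mul_left_dvd h) (ZMod n) a = 0 := by
  obtain ⟨k, rfl⟩ := ZMod.intCast_surjective a
  rw [map_intCast, ZMod.intCast_zmod_eq_zero_iff_dvd]
  rw [← Int.cast_natCast, ← Int.cast_mul, ZMod.intCast_zmod_eq_zero_iff_dvd] at ha
  refine Int.dvd_of_mul_dvd_mul_left (Int.natCast_ne_zero.2 hℓ) ?_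
  exact_mod_cast (Int.natCast_dvd_natCast.2 h).trans ha

theorem ZMod.exists_natCast_mul_eq {ℓ m : ℕ} (h : ℓ ∣ m) {a : ZMod m}
    (ha : ZMod.castHom h (ZMod ℓ) a = 0) : ∃ b, (ℓ : ZMod m) * b = a := by
  obtain ⟨k, rfl⟩ := ZMod.intCast_surjective a
  rw [map_intCast, ZMod.intCast_zmod_eq_zero_iff_dvd] at ha
  obtain ⟨j, rfl⟩ := ha
  exact ⟨j, by push_cast; ring⟩

theorem finsum_mem_const_nat {ι : Type*} (s : Set ι) (c : ℕ) :
    ∑ᶠ i ∈ s, c = s.ncard * c := by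
  rw [← finsum_one, finsum_mem_mul, finsum_mem_congr rfl fun _ _ => one_mul c]

theorem AddMonoidHom.ncard_preimage {G H : Type*} [AddGroup G] [AddGroup H] [Finite G]
    {f : G →+ H} (hf : Function.Surjective f) (S : Set H) :
    (f ⁻¹' S).ncard = S.ncard * (f ⁻¹' {0}).ncard := by
  have hfiber (b : H) : (f ⁻¹' {b}).ncard = (f ⁻¹' {0}).ncard := by
    obtain ⟨x, rfl⟩ := hf b
    have : f ⁻¹' {f x} = (x + ·) '' (f ⁻¹' {0}) := by
      ext y
      simp only [Set.image_add_left, Set.mem_preimage, Set.mem_singleton_iff, map_add, map_neg]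
      rw [neg_add_eq_zero, eq_comm]
    rw [this, Set.ncard_image_of_injective _ (add_right_injective x)]
  have : Finite H := Finite.of_surjective f hf
  rw [← Set.biUnion_preimage_singleton, (Set.toFinite S).ncard_biUnion (fun _ _ => Set.toFinite _)
    (Set.pairwiseDisjoint_fiber f S), finsum_mem_congr rfl fun b _ => hfiber b,
    finsum_mem_const_nat]

theorem ZMod.apply_eq_of_forall_apply_add_one_le {d : ℕ} [NeZero d] {c : ZMod d → ℕ}
    (h : ∀ a, c (a + 1) ≤ c a) (a b : ZMod d) : c a = c b := by
  have hshift (a : ZMod d) (k : ℕ) : c (a + k) ≤ c a := by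
    induction k with
    | zero => simp
    | succ k ih =>
      have hstep : c (a + (k + 1 : ℕ)) ≤ c (a + k) := by simpa [← add_assoc] using h (a + k)
      exact hstep.trans ih
  have hle (a b : ZMod d) : c b ≤ c a := by simpa using hshift a (b - a).val
  exact le_antisymm (hle b a) (hle a b)

theorem dvd_ncard_image_iUnion {α β : Type*} [Finite β] {d : ℕ} [NeZero d] {π : α → β}
    (hπ : Surjective π) {Φ : α → α} (hΦ : ∀ x y, π x = π y → π (Φ x) = π (Φ y))
    {B : ZMod d → Set α} (hB : ∀ a, π ⁻¹' (π '' B a) = B a)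
    (hdisj : Pairwise (Disjoint on B)) (hsucc : ∀ a, B (a + 1) ⊆ Φ '' B a) :
    d ∣ (π '' ⋃ a, B a).ncard := by
  obtain ⟨σ, hσ⟩ : ∃ σ : β → β, ∀ x, π (Φ x) = σ (π x) :=
    ⟨fun b => π (Φ (surjInv hπ b)), fun x => hΦ _ _ (surjInv_eq hπ _).symm⟩
  have hle (a : ZMod d) : (π '' B (a + 1)).ncard ≤ (π '' B a).ncard := by
    have hsub : π '' B (a + 1) ⊆ σ '' (π '' B a) := by
      refine (Set.image_mono (hsucc a)).trans ?_
      rw [Set.image_image, Set.image_image]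
      exact (Set.image_congr fun x _ => hσ x).subset
    exact (Set.ncard_le_ncard hsub (Set.toFinite _)).trans
      (Set.ncard_image_le (Set.toFinite _))
  have hdisj' : Pairwise (Disjoint on fun a => π '' B a) := fun a b hab =>
    (Set.disjoint_preimage_iff hπ).1 (by rw [hB, hB]; exact hdisj hab)
  rw [Set.image_iUnion, Set.ncard_iUnion_of_finite (fun _ => Set.toFinite _) hdisj',
    finsum_congr fun a =>
      ZMod.apply_eq_of_forall_apply_add_one_le (c := fun a => (π '' B a).ncard) hle a 0,
    finsum_eq_sum_of_fintype, Finset.sum_const, Finset.card_univ, ZMod.card, smul_eq_mul]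
  exact dvd_mul_right d _

section

variable {q : ℕ → ℕ}

theorem pp_succ (n : ℕ) : pp q (n + 1) = pp q n * q (n + 1) :=
  Finset.prod_range_succ q (n + 1)

theorem pp_ne_zero (hq : ∀ n, q n ≠ 0) (n : ℕ) : pp q n ≠ 0 :=
  Finset.prod_ne_zero_iff.2 fun i _ => hq i

theorem pp_dvd_pp {n m : ℕ} (h : n ≤ m) : pp q n ∣ pp q m :=
  Finset.prod_dvd_prod_of_subset _ _ _ (Finset.range_subset_range.2 (by omega))

theorem mul_pp_dvd_pp {ℓ n m : ℕ} (hnm : n < m) (hℓ : ℓ ∣ q m) : ℓ * pp q n ∣ pp q m := by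
  obtain ⟨k, rfl⟩ := Nat.exists_eq_add_of_lt hnm
  rw [pp_succ, mul_comm ℓ]
  exact mul_dvd_mul (pp_dvd_pp (by omega)) hℓ

theorem exists_forall_factorization_pp_le (hq : ∀ n, q n ≠ 0) {ℓ : ℕ}
    (hfin : {n | ℓ ∣ q n}.Finite) :
    ∃ n₀, ∀ n, (pp q n).factorization ℓ ≤ (pp q n₀).factorization ℓ := by
  obtain ⟨n₀, hn₀⟩ := hfin.bddAbove
  have hstable (m : ℕ) (hm : n₀ ≤ m) :
      (pp q m).factorization ℓ = (pp q n₀).factorization ℓ := by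
    induction m, hm using Nat.le_induction with
    | base => rfl
    | succ m hm ih =>
      have hℓ : ¬ ℓ ∣ q (m + 1) := fun h => by have := hn₀ h; omega
      rw [pp_succ, Nat.factorization_mul (pp_ne_zero hq m) (hq _), Finsupp.add_apply,
        Nat.factorization_eq_zero_of_not_dvd hℓ, add_zero, ih]
  refine ⟨n₀, fun n => ?_⟩
  rw [← hstable (max n n₀) (le_max_right _ _)]
  exact (Nat.factorization_le_iff_dvd (pp_ne_zero hq n) (pp_ne_zero hq _)).2
    (pp_dvd_pp (le_max_left _ _)) ℓ

end

namespace Odo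

variable {q : ℕ → ℕ}

def subring (q : ℕ → ℕ) : Subring (∀ n, ZMod (pp q n)) where
  carrier := {x | ∀ n, ZMod.castHom (pp_dvd q n) (ZMod (pp q n)) (x (n + 1)) = x n}
  mul_mem' hx hy n := by simp only [Pi.mul_apply, map_mul, hx n, hy n]
  one_mem' _ := map_one _
  add_mem' hx hy n := by simp only [Pi.add_apply, map_add, hx n, hy n]
  zero_mem' _ := map_zero _
  neg_mem' hx n := by simp only [Pi.neg_apply, map_neg, hx n]

instance : CommRing (Odo q) := inferInstanceAs (CommRing (subring q))

instance : IsTopologicalRing (Odo q) := inferInstanceAs (IsTopologicalRing (subring q))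

def coordHom (n : ℕ) : Odo q →+* ZMod (pp q n) where
  toFun x := x.1 n
  map_one' := rfl
  map_mul' _ _ := rfl
  map_zero' := rfl
  map_add' _ _ := rfl

theorem odoR_eq_add_one (x : Odo q) : odoR q x = x + 1 := rfl

theorem odoR_iterate (x : Odo q) (t : ℕ) : (odoR q)^[t] x = x + t := by
  induction t with
  | zero => simp
  | succ t ih => rw [iterate_succ_apply', ih, odoR_eq_add_one]; push_cast; ring

def IsFirstReturnConjugacy (C : Set (Odo q)) (φ : Odo q → Odo q) : Prop :=
  Continuous φ ∧ Injective φ ∧ Set.range φ = C ∧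
    ∀ x, φ (odoR q x) = (odoR q)^[retTime (odoR q) C (φ x)] (φ x)

theorem castHom_comp_coordHom {n m : ℕ} (h : n ≤ m) :
    (ZMod.castHom (pp_dvd_pp h) (ZMod (pp q n))).comp (coordHom m) = coordHom n := by
  induction m, h using Nat.le_induction with
  | base => exact RingHom.ext fun x => by simp [ZMod.castHom_apply, coordHom]
  | succ m hnm ih =>
    rw [← ih, RingHom.ext_zmod (ZMod.castHom _ _)
      ((ZMod.castHom (pp_dvd_pp hnm) _).comp (ZMod.castHom (pp_dvd q m) _)), RingHom.comp_assoc]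
    congr 1
    exact RingHom.ext fun x => x.2 m

theorem coordHom_surjective (n : ℕ) : Surjective (coordHom (q := q) n) :=
  fun a => ⟨((a.cast : ℤ) : Odo q), by rw [map_intCast, ZMod.intCast_zmod_cast]⟩

theorem continuous_coordHom (n : ℕ) : Continuous (coordHom (q := q) n) :=
  (continuous_apply n).comp continuous_subtype_val

theorem compactSpace (hq : ∀ n, q n ≠ 0) : CompactSpace (Odo q) := by
  have (n : ℕ) : NeZero (pp q n) := ⟨pp_ne_zero hq n⟩
  have hclosed : IsClosed
      {x : ∀ n, ZMod (pp q n) | ∀ n, ZMod.castHom (pp_dvd q n) _ (x (n + 1)) = x n} := by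
    simp only [Set.ofPred_forall]
    exact isClosed_iInter fun n =>
      isClosed_eq (continuous_of_discreteTopology.comp (continuous_apply _)) (continuous_apply n)
  exact isCompact_iff_compactSpace.1 hclosed.isCompact

theorem coordHom_eq_of_le {n m : ℕ} (h : n ≤ m) {x y : Odo q}
    (hxy : coordHom m x = coordHom m y) : coordHom n x = coordHom n y := by
  rw [← castHom_comp_coordHom h, RingHom.comp_apply, RingHom.comp_apply, hxy]

theorem eventually_preimage_coordHom_subset {s : Set (Odo q)} {x : Odo q} (hs : s ∈ 𝓝 x) :
    ∀ᶠ n in atTop, coordHom n ⁻¹' {coordHom n x} ⊆ s := by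
  obtain ⟨u, hu, hus⟩ := (mem_nhds_subtype _ x s).1 hs
  rw [nhds_pi, Filter.mem_pi] at hu
  obtain ⟨I, hI, t, ht, hIt⟩ := hu
  obtain ⟨n, hn⟩ := hI.bddAbove
  filter_upwards [eventually_ge_atTop n] with m hm y hy
  refine hus (hIt fun i hi => ?_)
  have hyi : coordHom i y = coordHom i x := coordHom_eq_of_le ((hn hi).trans hm) hy
  exact (congrArg (· ∈ t i) hyi).mpr (mem_of_mem_nhds (ht i))

def IsDeterminedAt (n : ℕ) (Y : Set (Odo q)) : Prop :=
  ∃ U : Set (ZMod (pp q n)), Y = coordHom n ⁻¹' U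

theorem IsDeterminedAt.mono {n m : ℕ} {Y : Set (Odo q)} (hY : IsDeterminedAt n Y) (h : n ≤ m) :
    IsDeterminedAt m Y := by
  obtain ⟨U, rfl⟩ := hY
  exact ⟨ZMod.castHom (pp_dvd_pp h) _ ⁻¹' U, by rw [← castHom_comp_coordHom h]; rfl⟩

theorem IsDeterminedAt.preimage_image {n : ℕ} {Y : Set (Odo q)} (hY : IsDeterminedAt n Y) :
    coordHom n ⁻¹' (coordHom n '' Y) = Y := by
  obtain ⟨U, rfl⟩ := hY
  rw [Set.image_preimage_eq _ (coordHom_surjective n)]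

theorem eventually_isDeterminedAt_of_isClopen (hq : ∀ n, q n ≠ 0) {Y : Set (Odo q)}
    (hY : IsClopen Y) : ∀ᶠ n in atTop, IsDeterminedAt n Y := by
  suffices ∃ n, IsDeterminedAt n Y from
    let ⟨n, hn⟩ := this; eventually_atTop.2 ⟨n, fun _ hm => hn.mono hm⟩
  have := compactSpace hq
  choose N hN using fun x (hx : x ∈ Y) =>
    (eventually_preimage_coordHom_subset (hY.isOpen.mem_nhds hx)).exists
  obtain ⟨t, ht⟩ := hY.isClosed.isCompact.elim_nhds_subcover'
    (fun x hx => coordHom (N x hx) ⁻¹' {coordHom (N x hx) x})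
    fun x hx => ((isOpen_discrete _).preimage (continuous_coordHom _)).mem_nhds rfl
  refine ⟨t.sup fun x : Y => N x x.2, coordHom _ '' Y,
    (Set.subset_preimage_image _ _).antisymm ?_⟩
  rintro y ⟨z, hz, hzy⟩
  obtain ⟨x, hxt, hzx⟩ := Set.mem_iUnion₂.1 (ht hz)
  have hle : N x x.2 ≤ t.sup fun x : Y => N x x.2 := Finset.le_sup (f := fun x : Y => N x x.2) hxt
  exact hN x x.2 ((coordHom_eq_of_le hle hzy.symm).trans hzx)

def toZMod {d n : ℕ} (hd : d ∣ pp q n) : Odo q →+* ZMod d :=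
  (ZMod.castHom hd (ZMod d)).comp (coordHom n)

theorem toZMod_of_le {d n m : ℕ} (hd : d ∣ pp q n) (h : n ≤ m) :
    toZMod (hd.trans (pp_dvd_pp h)) = toZMod (q := q) hd := by
  rw [toZMod, toZMod, ← castHom_comp_coordHom h, ← RingHom.comp_assoc]
  congr 1
  exact RingHom.ext_zmod _ _

theorem continuous_toZMod {d n : ℕ} (hd : d ∣ pp q n) : Continuous (toZMod (q := q) hd) :=
  (continuous_of_discreteTopology (f := ZMod.castHom hd (ZMod d))).comp (continuous_coordHom n)

theorem natCast_mul_injective {ℓ : ℕ} (hℓ : ℓ ≠ 0) (hinf : {n | ℓ ∣ q n}.Infinite) :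
    Injective ((ℓ : Odo q) * ·) := by
  refine (injective_iff_map_eq_zero (AddMonoidHom.mulLeft (ℓ : Odo q))).2 fun x hx =>
    Subtype.ext (funext fun n => ?_)
  obtain ⟨m, hm, hnm⟩ := hinf.exists_gt n
  have := ZMod.castHom_eq_zero_of_natCast_mul_eq_zero hℓ (mul_pp_dvd_pp hnm hm)
    (a := coordHom m x) (by simpa using congrArg (coordHom m) hx)
  rwa [← RingHom.comp_apply, castHom_comp_coordHom hnm.le] at this

theorem range_natCast_mul (hq : ∀ n, q n ≠ 0) {ℓ k : ℕ} (hℓ : ℓ ∣ pp q k) :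
    Set.range ((ℓ : Odo q) * ·) = toZMod hℓ ⁻¹' {0} := by
  have := compactSpace hq
  have hclosed : IsClosed (Set.range ((ℓ : Odo q) * ·)) :=
    (isCompact_range (continuous_const_mul _)).isClosed
  have hsub : Set.range ((ℓ : Odo q) * ·) ⊆ toZMod hℓ ⁻¹' {0} := Set.range_subset_iff.2 fun y => by
    rw [Set.mem_preimage, map_mul, map_natCast, ZMod.natCast_self, zero_mul]; rfl
  refine hsub.antisymm fun x hx => ?_
  -- the range is closed, so it suffices that it meets every cylinder around `x`
  rw [← hclosed.closure_eq, mem_closure_iff_nhds]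
  intro s hs
  obtain ⟨n, hns, hkn⟩ :=
    ((eventually_preimage_coordHom_subset hs).and (eventually_ge_atTop k)).exists
  have hx' : toZMod (hℓ.trans (pp_dvd_pp hkn)) x = 0 := by rwa [toZMod_of_le hℓ hkn]
  obtain ⟨b, hb⟩ := ZMod.exists_natCast_mul_eq (hℓ.trans (pp_dvd_pp hkn)) hx'
  obtain ⟨y, rfl⟩ := coordHom_surjective n b
  exact ⟨ℓ * y, hns (by simpa using hb), y, rfl⟩

theorem retTime_natCast_mul {ℓ k : ℕ} (hℓ₀ : 0 < ℓ) (hℓ : ℓ ∣ pp q k) (x : Odo q) :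
    retTime (odoR q) (toZMod hℓ ⁻¹' {0}) (ℓ * x) = ℓ := by
  have hmem (t : ℕ) : (odoR q)^[t] (ℓ * x) ∈ toZMod hℓ ⁻¹' {0} ↔ ℓ ∣ t := by
    simp [odoR_iterate, ZMod.natCast_eq_zero_iff]
  exact retTime_eq hℓ₀ ((hmem ℓ).2 dvd_rfl) fun t ht htℓ h =>
    (Nat.not_dvd_of_pos_of_lt ht htℓ) ((hmem t).1 h)

theorem exists_isFirstReturnConjugacy_of_infinite (hq : ∀ n, q n ≠ 0) {ℓ : ℕ} (hℓ : ℓ.Prime)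
    (hinf : {n | ℓ ∣ q n}.Infinite) :
    ∃ C : Set (Odo q), IsClopen C ∧ C.Nonempty ∧ C ≠ Set.univ ∧
      ∃ φ, IsFirstReturnConjugacy C φ := by
  have : Fact ℓ.Prime := ⟨hℓ⟩
  obtain ⟨k, hk⟩ := hinf.nonempty
  have hℓk : ℓ ∣ pp q k := hk.trans (Finset.dvd_prod_of_mem q (Finset.self_mem_range_succ k))
  refine ⟨toZMod hℓk ⁻¹' {0}, (isClopen_discrete _).preimage (continuous_toZMod hℓk),
    ⟨0, map_zero _⟩, fun h => ?_, (ℓ * ·), continuous_const_mul _,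
    natCast_mul_injective hℓ.ne_zero hinf, range_natCast_mul hq hℓk, fun x => ?_⟩
  · have : (1 : Odo q) ∈ toZMod hℓk ⁻¹' {0} := h ▸ Set.mem_univ _
    simp at this
  · rw [retTime_natCast_mul hℓ.pos, odoR_iterate, odoR_eq_add_one]
    ring

theorem retTime_odoR_congr {n : ℕ} {C : Set (Odo q)} (hC : IsDeterminedAt n C) {x y : Odo q}
    (hxy : coordHom n x = coordHom n y) : retTime (odoR q) C x = retTime (odoR q) C y := by
  obtain ⟨U, rfl⟩ := hC
  simp only [retTime, odoR_iterate, Set.mem_preimage, map_add, map_natCast, hxy]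

theorem IsDeterminedAt.ncard_image_coordHom_mul (hq : ∀ n, q n ≠ 0) {n m : ℕ}
    {Y : Set (Odo q)} (hY : IsDeterminedAt n Y) (h : n ≤ m) :
    (coordHom m '' Y).ncard * pp q n = (coordHom n '' Y).ncard * pp q m := by
  have : NeZero (pp q m) := ⟨pp_ne_zero hq m⟩
  set f := ZMod.castHom (pp_dvd_pp h) (ZMod (pp q n))
  have hcount :=
    AddMonoidHom.ncard_preimage (f := f.toAddMonoidHom) (ZMod.castHom_surjective (pp_dvd_pp h))
  have hker : pp q m = pp q n * (f ⁻¹' {0}).ncard := by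
    simpa [Set.ncard_univ, Nat.card_zmod] using hcount Set.univ
  obtain ⟨U, rfl⟩ := hY
  have hU : coordHom n ⁻¹' U = coordHom m ⁻¹' (f ⁻¹' U) := by
    rw [← castHom_comp_coordHom h]; rfl
  rw [Set.image_preimage_eq _ (coordHom_surjective n), hU,
    Set.image_preimage_eq _ (coordHom_surjective m)]
  simp only [RingHom.toAddMonoidHom_eq_coe, AddMonoidHom.coe_coe] at hcount
  rw [hcount, mul_assoc, mul_comm _ (pp q n), ← hker]

theorem IsFirstReturnConjugacy.eventually_dvd_ncard_image_coordHom (hq : ∀ n, q n ≠ 0)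
    {C : Set (Odo q)} (hC : IsClopen C) {φ : Odo q → Odo q} (hφ : IsFirstReturnConjugacy C φ)
    {d n : ℕ} (hd : d ∣ pp q n) : ∀ᶠ N in atTop, d ∣ (coordHom N '' C).ncard := by
  obtain ⟨hφc, hinj, hrange, hself⟩ := hφ
  have := compactSpace hq
  have (N : ℕ) : NeZero (pp q N) := ⟨pp_ne_zero hq N⟩
  have : NeZero d := ⟨ne_zero_of_dvd_ne_zero (pp_ne_zero hq n) hd⟩
  set B : ZMod d → Set (Odo q) := fun a => φ '' (toZMod hd ⁻¹' {a})
  have hBunion : ⋃ a, B a = C := by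
    rw [← Set.image_iUnion, ← Set.preimage_iUnion, Set.iUnion_of_singleton, Set.preimage_univ,
      Set.image_univ, hrange]
  have hBdisj : Pairwise (Disjoint on B) := fun a b hab =>
    (Set.disjoint_image_iff hinj).2 ((Set.disjoint_singleton.2 hab).preimage _)
  have hBclopen (a : ZMod d) : IsClopen (B a) :=
    ((isClopen_discrete {a}).preimage (continuous_toZMod hd)).image_of_isOpen_range hφc hinj
      (hrange ▸ hC.isOpen)
  have hBsucc (a : ZMod d) :
      B (a + 1) = (fun z => (odoR q)^[retTime (odoR q) C z] z) '' B a := by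
    have hA : toZMod hd ⁻¹' {a + 1} = odoR q '' (toZMod hd ⁻¹' {a}) := by
      rw [show odoR q = (· + 1) from funext odoR_eq_add_one, Set.image_add_right]
      ext x
      simp [← sub_eq_add_neg, sub_eq_iff_eq_add]
    simp only [B, hA, Set.image_image, hself]
  filter_upwards [eventually_isDeterminedAt_of_isClopen hq hC,
    eventually_all.2 fun a => eventually_isDeterminedAt_of_isClopen hq (hBclopen a)]
    with N hCN hBN
  rw [← hBunion]
  refine dvd_ncard_image_iUnion (coordHom_surjective N) (fun x y hxy => ?_)
    (fun a => (hBN a).preimage_image) hBdisj fun a => (hBsucc a).subset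
  simp only [odoR_iterate, map_add, map_natCast, hxy, retTime_odoR_congr hCN hxy]

theorem IsFirstReturnConjugacy.factorization_pp_le (hq : ∀ n, q n ≠ 0) {C : Set (Odo q)}
    (hC : IsClopen C) (hne : C.Nonempty) {φ : Odo q → Odo q} (hφ : IsFirstReturnConjugacy C φ)
    {N : ℕ} (hN : IsDeterminedAt N C) {ℓ : ℕ} (hℓ : ℓ.Prime) (hfin : {n | ℓ ∣ q n}.Finite) :
    (pp q N).factorization ℓ ≤ (coordHom N '' C).ncard.factorization ℓ := by
  have (N : ℕ) : NeZero (pp q N) := ⟨pp_ne_zero hq N⟩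
  have hpos (M : ℕ) : (coordHom M '' C).ncard ≠ 0 :=
    ((Set.ncard_pos (Set.toFinite _)).2 (hne.image _)).ne'
  obtain ⟨n₀, hn₀⟩ := exists_forall_factorization_pp_le hq hfin
  obtain ⟨N', hdvd, hNN'⟩ := ((hφ.eventually_dvd_ncard_image_coordHom hq hC
    (Nat.ordProj_dvd (pp q n₀) ℓ)).and (eventually_ge_atTop N)).exists
  have hscale := congrArg (·.factorization ℓ) (hN.ncard_image_coordHom_mul hq hNN')
  simp only [Nat.factorization_mul (hpos _) (pp_ne_zero hq _), Finsupp.add_apply] at hscale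
  have := (hℓ.pow_dvd_iff_le_factorization (hpos N')).1 hdvd
  have := hn₀ N'
  omega

theorem IsFirstReturnConjugacy.exists_prime_infinite (hq : ∀ n, q n ≠ 0) {C : Set (Odo q)}
    (hC : IsClopen C) (hne : C.Nonempty) (hC_ne : C ≠ Set.univ) {φ : Odo q → Odo q}
    (hφ : IsFirstReturnConjugacy C φ) : ∃ ℓ, ℓ.Prime ∧ {n | ℓ ∣ q n}.Infinite := by
  have (N : ℕ) : NeZero (pp q N) := ⟨pp_ne_zero hq N⟩
  obtain ⟨N, hN⟩ := (eventually_isDeterminedAt_of_isClopen hq hC).exists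
  have hu₀ : (coordHom N '' C).ncard ≠ 0 :=
    ((Set.ncard_pos (Set.toFinite _)).2 (hne.image _)).ne'
  have hu : (coordHom N '' C).ncard < pp q N := by
    have hssub : coordHom N '' C ⊂ Set.univ := Set.ssubset_univ_iff.2 fun h =>
      hC_ne (by rw [← hN.preimage_image, h, Set.preimage_univ])
    simpa [Set.ncard_univ] using Set.ncard_lt_ncard hssub
  have hndvd : ¬ ∀ ℓ : ℕ, ℓ.Prime →
      (pp q N).factorization ℓ ≤ (coordHom N '' C).ncard.factorization ℓ := by
    rw [Nat.factorization_prime_le_iff_dvd (pp_ne_zero hq N) hu₀]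
    exact Nat.not_dvd_of_pos_of_lt (Nat.pos_of_ne_zero hu₀) hu
  push Not at hndvd
  obtain ⟨ℓ, hℓ, hlt⟩ := hndvd
  exact ⟨ℓ, hℓ, fun hfin => hlt.not_ge (hφ.factorization_pp_le hq hC hne hN hℓ hfin)⟩

end Odo

theorem stmt8 (q : ℕ → ℕ) (hq : ∀ n, 2 ≤ q n) :
    (∃ C : Set (Odo q), IsClopen C ∧ C.Nonempty ∧ C ≠ Set.univ ∧
      ∃ φ : Odo q → Odo q, Continuous φ ∧ Function.Injective φ ∧ Set.range φ = C ∧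
        ∀ x : Odo q, φ (odoR q x) = (odoR q)^[retTime (odoR q) C (φ x)] (φ x)) ↔
    (∃ ℓ : ℕ, ℓ.Prime ∧ {n : ℕ | ℓ ∣ q n}.Infinite) := by
  have hq₀ (n : ℕ) : q n ≠ 0 := by have := hq n; omega
  constructor
  · rintro ⟨C, hC, hne, hC_ne, φ, hφ⟩
    exact Odo.IsFirstReturnConjugacy.exists_prime_infinite hq₀ hC hne hC_ne hφ
  · rintro ⟨ℓ, hℓ, hinf⟩
    exact Odo.exists_isFirstReturnConjugacy_of_infinite hq₀ hℓ hinf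
end

section
/- Let (q_n) and (q'_n) be sequences of integers ≥ 2 with p_n = q_1⋯q_n, p'_n = q'_1⋯q'_n. The odometer (ℤ_{(q'_n)}, R) is a topological factor of (ℤ_{(q_n)}, R) if and only if for all n there exists k such that p'_n divides p_k. -/
open Set

theorem pp_dvd_le (q : ℕ → ℕ) {m K : ℕ} (h : m ≤ K) : pp q m ∣ pp q K :=
  Finset.prod_dvd_prod_of_subset _ _ _ (Finset.range_subset_range.2 (by omega))

theorem pp_pos (q : ℕ → ℕ) (hq : ∀ n, 2 ≤ q n) (n : ℕ) : 0 < pp q n :=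
  Finset.prod_pos fun i _ => by have := hq i; omega

theorem coh (q : ℕ → ℕ) (x : Odo q) {m K : ℕ} (h : m ≤ K) :
    ZMod.castHom (pp_dvd_le q h) (ZMod (pp q m)) (x.1 K) = x.1 m := by
  induction K with
  | zero => interval_cases m; simp
  | succ K ih =>
    rcases Nat.lt_or_ge m (K+1) with hm | hm
    · have hm' : m ≤ K := by omega
      have := DFunLike.congr_fun
        (ZMod.castHom_comp (pp_dvd_le q hm') (pp_dvd q K)) (x.1 (K+1))
      simp only [RingHom.comp_apply] at this ⊢
      rw [← this, x.2 K, ih hm']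
    · have : m = K + 1 := by omega
      subst this; simp

theorem agree (q : ℕ → ℕ) (x z : Odo q) {K : ℕ} (h : x.1 K = z.1 K) {m : ℕ} (hm : m ≤ K) :
    x.1 m = z.1 m := by
  rw [← coh q x hm, ← coh q z hm, h]

theorem iter_coord (q : ℕ → ℕ) (x : Odo q) (m n : ℕ) :
    ((odoR q)^[m] x).1 n = x.1 n + m := by
  induction m with
  | zero => simp
  | succ m ih => rw [Function.iterate_succ_apply', odoR]; push_cast; rw [ih]; ring

theorem nbhd_basis (q : ℕ → ℕ) {U : Set (Odo q)} (hU : IsOpen U) {z : Odo q} (hz : z ∈ U) :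
    ∃ K : ℕ, ∀ x : Odo q, x.1 K = z.1 K → x ∈ U := by
  rw [isOpen_induced_iff] at hU
  obtain ⟨W, hW, rfl⟩ := hU
  obtain ⟨I, u, hIu, hpi⟩ := isOpen_pi_iff.mp hW z.1 hz
  refine ⟨I.sup id, fun x hx => hpi ?_⟩
  intro i hi
  rw [show x.1 i = z.1 i from agree q x z hx (Finset.le_sup (f := id) hi)]
  exact (hIu i hi).2

theorem cast_coh (q : ℕ → ℕ) (x : Odo q) {N a b : ℕ} (ha : N ∣ pp q a) (hb : N ∣ pp q b) :
    ZMod.castHom ha (ZMod N) (x.1 a) = ZMod.castHom hb (ZMod N) (x.1 b) := by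
  conv_lhs => rw [← coh q x (le_max_left a b)]
  conv_rhs => rw [← coh q x (le_max_right a b)]
  rw [← RingHom.comp_apply, ZMod.castHom_comp, ← RingHom.comp_apply, ZMod.castHom_comp]

theorem iter_comm {q q' : ℕ → ℕ} {φ : Odo q → Odo q'}
    (hfac : ∀ x, φ (odoR q x) = odoR q' (φ x)) (m : ℕ) (x : Odo q) :
    φ ((odoR q)^[m] x) = (odoR q')^[m] (φ x) := by
  induction m with
  | zero => rfl
  | succ m ih => rw [Function.iterate_succ_apply', hfac, ih, Function.iterate_succ_apply']

theorem stmt10 (q q' : ℕ → ℕ) (hq : ∀ n, 2 ≤ q n) (hq' : ∀ n, 2 ≤ q' n) :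
    (∃ φ : Odo q → Odo q', Continuous φ ∧ Function.Surjective φ ∧
      ∀ x : Odo q, φ (odoR q x) = odoR q' (φ x)) ↔
    (∀ n : ℕ, ∃ k : ℕ, pp q' n ∣ pp q k) := by
  haveI hNZ : ∀ n, NeZero (pp q n) := fun n => ⟨(pp_pos q hq n).ne'⟩
  haveI hNZ' : ∀ n, NeZero (pp q' n) := fun n => ⟨(pp_pos q' hq' n).ne'⟩
  constructor
  · rintro ⟨φ, hc, -, hfac⟩ n
    set f : Odo q → ZMod (pp q' n) := fun x => (φ x).1 n with hfdef
    have hfc : Continuous f := (continuous_apply n).comp (continuous_subtype_val.comp hc)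
    let z0 : Odo q := ⟨fun _ => 0, fun _ => by simp⟩
    have hopen : IsOpen (f ⁻¹' {f z0}) := (isOpen_discrete _).preimage hfc
    obtain ⟨K, hK⟩ := nbhd_basis q hopen (Set.mem_preimage.mpr rfl)
    refine ⟨K, ?_⟩
    have h1 : ((odoR q)^[pp q K] z0).1 K = z0.1 K := by
      simp [iter_coord, ZMod.natCast_self]
    have h2 := hK _ h1
    simp only [Set.mem_preimage, Set.mem_singleton_iff, hfdef] at h2
    rw [iter_comm hfac, iter_coord] at h2
    have h3 : ((pp q K : ℕ) : ZMod (pp q' n)) = 0 := by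
      have := add_left_cancel (a := (φ z0).1 n) (b := (pp q K : ZMod (pp q' n))) (c := 0)
        (by rw [add_zero]; exact h2)
      exact this
    exact (ZMod.natCast_eq_zero_iff _ _).mp h3
  · intro h
    choose k hk using h
    let φ : Odo q → Odo q' := fun x =>
      ⟨fun n => ZMod.castHom (hk n) (ZMod (pp q' n)) (x.1 (k n)), fun n => by
        rw [← RingHom.comp_apply, ZMod.castHom_comp]
        exact cast_coh q x _ _⟩
    have hc : Continuous φ := by
      apply Continuous.subtype_mk
      apply continuous_pi
      intro n
      exact continuous_of_discreteTopology.comp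
        ((continuous_apply (k n)).comp continuous_subtype_val)
    have hfac : ∀ x, φ (odoR q x) = odoR q' (φ x) := by
      intro x
      apply Subtype.ext
      funext n
      show ZMod.castHom (hk n) (ZMod (pp q' n)) (x.1 (k n) + 1) = _
      rw [map_add, map_one]
      rfl
    refine ⟨φ, hc, ?_, hfac⟩
    -- surjectivity
    have hcl : IsClosed {x : ∀ n, ZMod (pp q n) |
        ∀ n, ZMod.castHom (pp_dvd q n) (ZMod (pp q n)) (x (n + 1)) = x n} := by
      rw [Set.setOf_forall]
      exact isClosed_iInter fun n => isClosed_eq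
        (continuous_of_discreteTopology.comp (continuous_apply (n + 1))) (continuous_apply n)
    haveI : CompactSpace (Odo q) := isCompact_iff_compactSpace.mp hcl.isCompact
    have hclr : IsClosed (Set.range φ) := (isCompact_range hc).isClosed
    have hdense : Dense (Set.range φ) := by
      intro y
      rw [mem_closure_iff]
      intro U hU hyU
      obtain ⟨K, hK⟩ := nbhd_basis q' hU hyU
      let z0 : Odo q := ⟨fun _ => 0, fun _ => by simp⟩
      let c : ZMod (pp q' K) := y.1 K - (φ z0).1 K
      refine ⟨φ ((odoR q)^[c.val] z0), hK _ ?_, Set.mem_range_self _⟩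
      rw [iter_comm hfac, iter_coord, ZMod.natCast_rightInverse c]
      simp [c]
    have : Set.range φ = Set.univ := by
      rw [← hclr.closure_eq, hdense.closure_eq]
    exact Set.range_eq_univ.mp this
end

section
/- Let σ be the substitution σ(0)=01, σ(1)=00 on {0,1} and define T on X_σ × ℤ_3 by T(x,z)=(Sx, z+1). Let U = σ(X_σ) × ℤ_3 and define φ(x,z) = (σ(x), 2z). Then U is a clopen proper subset, the first return time of T to U is constantly 2, the induced map is T_U(x,z) = (S²x, z+2), and φ is a conjugacy from (X_σ × ℤ_3, T) to (U, T_U); hence the system is self-induced. -/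
open Set

/-- The extension of a substitution to words, by concatenation. -/
def substWord {A : Type*} (σ : A → List A) (w : List A) : List A :=
  w.foldr (fun a r => σ a ++ r) []

/-- The word `x[i..j]` read off a bi-infinite sequence. -/
def window {A : Type*} (x : ℤ → A) (i j : ℤ) : List A :=
  (List.range (j - i + 1).toNat).map fun t => x (i + t)

/-- The substitution subshift: all sequences whose subwords occur in some `σᵏ(a)`. -/
def SubSubshift {A : Type*} (σ : A → List A) : Set (ℤ → A) :=
  {x | ∀ i j : ℤ, i ≤ j → ∃ (a : A) (k : ℕ), window x i j <:+: (substWord σ)^[k] [a]}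

/-- The substitution `0 ↦ 01`, `1 ↦ 00` on the alphabet `{0,1}`. -/
def σ01 : Fin 2 → List (Fin 2) := fun a => if a = 0 then [0, 1] else [0, 0]

/-- The phase space: sequences times the `3`-adic integers. -/
abbrev P3 : Type := (ℤ → Fin 2) × ℤ_[3]

/-- The `n`-th power of the map `T(x,z) = (Sx, z+1)`. -/
noncomputable def Tmap (n : ℤ) (p : P3) : P3 := (fun i => p.1 (i + n), p.2 + (n : ℤ_[3]))

/-- The product system `X_σ × ℤ_3`. -/
def Y3 : Set P3 := {p | p.1 ∈ SubSubshift σ01}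

/-- The extension of `σ01` (constant length 2) to bi-infinite sequences. -/
def sigSeq (x : ℤ → Fin 2) : ℤ → Fin 2 := fun n =>
  if Int.emod n 2 = 0 then 0 else (if x (Int.ediv n 2) = 0 then 1 else 0)

/-- The map `φ(x,z) = (σ(x), 2z)`. -/
noncomputable def φ3 (p : P3) : P3 := (sigSeq p.1, 2 * p.2)

/-- The clopen set `U = σ(X_σ) × ℤ_3`. -/
def U3 : Set P3 := {p | p ∈ Y3 ∧ ∃ x ∈ SubSubshift σ01, sigSeq x = p.1}


/-!
Every word `σ^k(a)` with `k ≥ 1` has `0` at all even positions, so the `1`s of a point of `X_σ`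
all sit at positions of a single parity, and `11` is not a factor. A point lies in `σ(X_σ)`
exactly when its even positions are `0`: the preimage is read off the odd positions, and an
occurrence of its windows is found by aligning an occurrence of the image with the blocks
`σ(b)`, a misaligned one producing a forbidden `11`. Since `11` is forbidden, a point with zeros
at even positions has a `1` at position `1` or `3`, so `U` is clopen. A point of `U` cannot
return after one step (its preimage would be constantly `1`), but returns after two because
`S² ∘ σ = σ ∘ S`. Multiplication by `2` is a bijection of `ℤ_3` as `2` is a unit, and `X_σ` is
nonempty: it contains the two-sided period-doubling sequence `n ↦ v₂(n) mod 2`.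
-/

open Function

section Substitution

variable {A : Type*} (σ : A → List A)

@[simp] lemma substWord_nil : substWord σ [] = [] := rfl

@[simp] lemma substWord_cons (a : A) (w : List A) :
    substWord σ (a :: w) = σ a ++ substWord σ w := rfl

lemma length_substWord_of_forall_length_eq {L : ℕ} (hσ : ∀ a, (σ a).length = L)
    (w : List A) : (substWord σ w).length = L * w.length := by
  induction w with
  | nil => simp
  | cons a w ih => simp [hσ, ih, Nat.mul_succ, Nat.add_comm]

lemma getElem?_substWord_of_forall_length_eq {L : ℕ} (hσ : ∀ a, (σ a).length = L)
    (w : List A) (i : ℕ) {r : ℕ} (hr : r < L) :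
    (substWord σ w)[L * i + r]? = w[i]?.bind fun a => (σ a)[r]? := by
  induction w generalizing i with
  | nil => simp
  | cons a w ih =>
    rcases i with _ | i
    · simp [List.getElem?_append_left, hσ, hr]
    · rw [substWord_cons, List.getElem?_append_right (by rw [hσ]; nlinarith), hσ,
        show L * (i + 1) + r - L = L * i + r by rw [Nat.mul_succ]; omega, ih]
      rfl

end Substitution

lemma σ01_eq (a : Fin 2) : σ01 a = [0, a.rev] := by
  fin_cases a <;> rfl

lemma length_σ01 (a : Fin 2) : (σ01 a).length = 2 := by
  simp [σ01_eq]

lemma length_substWord_σ01 (w : List (Fin 2)) : (substWord σ01 w).length = 2 * w.length :=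
  length_substWord_of_forall_length_eq σ01 length_σ01 w

lemma getElem?_substWord_σ01_two_mul (w : List (Fin 2)) (i : ℕ) :
    (substWord σ01 w)[2 * i]? = w[i]?.map fun _ => 0 := by
  rw [← Nat.add_zero (2 * i), getElem?_substWord_of_forall_length_eq σ01 length_σ01 w i two_pos]
  cases w[i]? <;> simp [σ01_eq]

lemma getElem?_substWord_σ01_two_mul_add_one (w : List (Fin 2)) (i : ℕ) :
    (substWord σ01 w)[2 * i + 1]? = w[i]?.map Fin.rev := by
  rw [getElem?_substWord_of_forall_length_eq σ01 length_σ01 w i one_lt_two]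
  cases w[i]? <;> simp [σ01_eq, List.getElem_cons]

lemma length_iterate_substWord_σ01 (k : ℕ) (w : List (Fin 2)) :
    ((substWord σ01)^[k] w).length = 2 ^ k * w.length := by
  induction k with
  | zero => simp
  | succ k ih => rw [iterate_succ_apply', length_substWord_σ01, ih, pow_succ]; ring

lemma odd_of_getElem?_iterate_substWord_σ01_eq_one {k : ℕ} (hk : k ≠ 0) {w : List (Fin 2)}
    {n : ℕ} (h : ((substWord σ01)^[k] w)[n]? = some 1) : Odd n := by
  obtain ⟨k, rfl⟩ := Nat.exists_eq_succ_of_ne_zero hk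
  rw [iterate_succ_apply'] at h
  refine Nat.not_even_iff_odd.1 fun ⟨i, hi⟩ => ?_
  rw [hi, ← two_mul, getElem?_substWord_σ01_two_mul] at h
  cases h' : ((substWord σ01)^[k] w)[i]? <;> simp [h'] at h

section Window

variable {A : Type*}

def OccursAt (x : ℤ → A) (i j : ℤ) (L : List A) (s : ℕ) : Prop :=
  ∀ t : ℕ, i + t ≤ j → L[s + t]? = some (x (i + t))

lemma length_window (x : ℤ → A) (i j : ℤ) : (window x i j).length = (j - i + 1).toNat := by
  simp [window]

lemma getElem_window (x : ℤ → A) (i j : ℤ) (t : ℕ) (ht : t < (window x i j).length) :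
    (window x i j)[t] = x (i + t) := by
  simp [window, ← List.map_eq_flatMap]

lemma window_infix_iff {x : ℤ → A} {i j : ℤ} (hij : i ≤ j) {L : List A} :
    window x i j <:+: L ↔ ∃ s, OccursAt x i j L s := by
  rw [List.infix_iff_getElem?]
  constructor
  · rintro ⟨s, -, h⟩
    refine ⟨s, fun t ht => ?_⟩
    rw [add_comm s, h t (by rw [length_window]; omega), getElem_window]
  · rintro ⟨s, h⟩
    have hlast := (List.getElem?_eq_some_iff.1 (h (j - i).toNat (by omega))).1
    refine ⟨s, by rw [length_window]; omega, fun t ht => ?_⟩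
    rw [length_window] at ht
    rw [add_comm t, h t (by omega), getElem_window]

lemma OccursAt.mono {x : ℤ → A} {i j i' j' : ℤ} {L : List A} {s : ℕ}
    (h : OccursAt x i' j' L s) (hi : i' ≤ i) (hj : j ≤ j') :
    OccursAt x i j L (s + (i - i').toNat) := by
  intro t ht
  rw [add_assoc, h _ (by omega)]
  congr 2
  omega

lemma mem_SubSubshift_iff {σ : A → List A} {x : ℤ → A} :
    x ∈ SubSubshift σ ↔ ∀ i j, i ≤ j → ∃ a k s, OccursAt x i j ((substWord σ)^[k] [a]) s := by
  refine forall₂_congr fun i j => forall_congr' fun hij => ?_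
  simp only [window_infix_iff hij]

lemma shift_mem_SubSubshift {σ : A → List A} {x : ℤ → A} (hx : x ∈ SubSubshift σ) (n : ℤ) :
    (fun m => x (m + n)) ∈ SubSubshift σ := by
  rw [mem_SubSubshift_iff] at hx ⊢
  intro i j hij
  obtain ⟨a, k, s, h⟩ := hx (i + n) (j + n) (by omega)
  exact ⟨a, k, s, fun t ht => by rw [h t (by omega), add_right_comm]⟩

end Window

lemma Option.map_rev_eq_some_iff {n : ℕ} {o : Option (Fin n)} {a : Fin n} :
    o.map Fin.rev = some a ↔ o = some a.rev := by
  cases o <;> simp [Fin.rev_eq_iff]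

lemma fin_two_rev_eq_one_iff (a : Fin 2) : a.rev = 1 ↔ a = 0 := by
  fin_cases a <;> decide

lemma getElem?_iterate_substWord_σ01_succ_ne_one {k : ℕ} {a : Fin 2} {u : ℕ}
    (h : ((substWord σ01)^[k] [a])[u]? = some 1) :
    ((substWord σ01)^[k] [a])[u + 1]? ≠ some 1 := by
  intro h'
  rcases eq_or_ne k 0 with rfl | hk
  · simp at h'
  · have hu := odd_of_getElem?_iterate_substWord_σ01_eq_one hk h
    have hu' := odd_of_getElem?_iterate_substWord_σ01_eq_one hk h'
    exact Nat.not_even_iff_odd.2 hu' hu.add_one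

lemma sigSeq_two_mul (x : ℤ → Fin 2) (k : ℤ) : sigSeq x (2 * k) = 0 := by
  have hmod : Int.emod (2 * k) 2 = 0 := show 2 * k % 2 = 0 by omega
  simp [sigSeq, hmod]

lemma sigSeq_two_mul_add_one (x : ℤ → Fin 2) (k : ℤ) : sigSeq x (2 * k + 1) = (x k).rev := by
  have hmod : Int.emod (2 * k + 1) 2 = 1 := show (2 * k + 1) % 2 = 1 by omega
  have hdiv : Int.ediv (2 * k + 1) 2 = k := show (2 * k + 1) / 2 = k by omega
  simp only [sigSeq, hmod, hdiv]
  generalize x k = a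
  fin_cases a <;> rfl

lemma sigSeq_injective : Injective sigSeq := fun x y h => funext fun k => by
  simpa [sigSeq_two_mul_add_one] using congrFun h (2 * k + 1)

lemma sigSeq_comp_shift (x : ℤ → Fin 2) :
    sigSeq (fun m => x (m + 1)) = fun n => sigSeq x (n + 2) := by
  funext n
  obtain ⟨k, rfl | rfl⟩ := Int.even_or_odd' n
  · rw [sigSeq_two_mul, show 2 * k + 2 = 2 * (k + 1) by ring, sigSeq_two_mul]
  · rw [sigSeq_two_mul_add_one, show 2 * k + 1 + 2 = 2 * (k + 1) + 1 by ring,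
      sigSeq_two_mul_add_one]

lemma OccursAt.sigSeq {x : ℤ → Fin 2} {i j : ℤ} {V : List (Fin 2)} {s : ℕ}
    (h : OccursAt x i j V s) :
    OccursAt (sigSeq x) (2 * i) (2 * j + 1) (substWord σ01 V) (2 * s) := by
  intro t ht
  obtain ⟨u, rfl | rfl⟩ := Nat.even_or_odd' t
  · rw [← mul_add, getElem?_substWord_σ01_two_mul, h u (by omega), Nat.cast_mul, Nat.cast_two,
      ← mul_add, sigSeq_two_mul]
    rfl
  · rw [← add_assoc, ← mul_add, getElem?_substWord_σ01_two_mul_add_one, h u (by omega),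
      show 2 * i + ((2 * u + 1 : ℕ) : ℤ) = 2 * (i + u) + 1 by push_cast; ring,
      sigSeq_two_mul_add_one]
    rfl

lemma sigSeq_mem_SubSubshift {x : ℤ → Fin 2} (hx : x ∈ SubSubshift σ01) :
    sigSeq x ∈ SubSubshift σ01 := by
  rw [mem_SubSubshift_iff] at hx ⊢
  intro i j hij
  obtain ⟨a, k, s, h⟩ := hx (i / 2) (j / 2) (Int.ediv_le_ediv two_pos hij)
  refine ⟨a, k + 1, 2 * s + (i - 2 * (i / 2)).toNat, ?_⟩
  rw [iterate_succ_apply']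
  exact h.sigSeq.mono (by omega) (by omega)

lemma even_sub_of_eq_one {x : ℤ → Fin 2} (hx : x ∈ SubSubshift σ01) {a b : ℤ}
    (ha : x a = 1) (hb : x b = 1) : Even (b - a) := by
  wlog hab : a ≤ b generalizing a b
  · simpa using (this hb ha (le_of_not_ge hab)).neg
  obtain ⟨c, k, s, h⟩ := mem_SubSubshift_iff.1 hx a b hab
  have hs : ((substWord σ01)^[k] [c])[s]? = some 1 := by simpa [ha] using h 0 (by omega)
  have hsd : ((substWord σ01)^[k] [c])[s + (b - a).toNat]? = some 1 := by
    rw [h _ (by omega), show a + (b - a).toNat = b by omega, hb]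
  rcases eq_or_ne k 0 with rfl | hk
  · simp only [iterate_zero, id_eq, List.getElem?_singleton] at hsd
    split_ifs at hsd
    exact ⟨0, by omega⟩
  · obtain ⟨u, hu⟩ := odd_of_getElem?_iterate_substWord_σ01_eq_one hk hs
    obtain ⟨v, hv⟩ := odd_of_getElem?_iterate_substWord_σ01_eq_one hk hsd
    exact ⟨v - u, by omega⟩

lemma exists_sigSeq_eq_of_forall_two_mul_eq_zero {x : ℤ → Fin 2} (hx : x ∈ SubSubshift σ01)
    (hev : ∀ k, x (2 * k) = 0) : ∃ y ∈ SubSubshift σ01, sigSeq y = x := by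
  set y : ℤ → Fin 2 := fun k => (x (2 * k + 1)).rev
  have hsig : sigSeq y = x := funext fun n => by
    obtain ⟨k, rfl | rfl⟩ := Int.even_or_odd' n
    · rw [sigSeq_two_mul, hev]
    · rw [sigSeq_two_mul_add_one, Fin.rev_rev]
  refine ⟨y, mem_SubSubshift_iff.2 fun i j hij => ?_, hsig⟩
  obtain ⟨a, m, s, h⟩ := mem_SubSubshift_iff.1 hx (2 * i) (2 * (j + 1) + 1) (by omega)
  rcases m with _ | m
  · simpa using h 1 (by omega)
  set V := (substWord σ01)^[m] [a]
  rw [iterate_succ_apply'] at h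
  have hodd (t : ℕ) (ht : 2 * i + t ≤ 2 * (j + 1) + 1) {u : ℕ} (hu : s + t = 2 * u + 1) :
      V[u]? = some (x (2 * i + t)).rev := by
    rw [← Option.map_rev_eq_some_iff, ← getElem?_substWord_σ01_two_mul_add_one, ← hu, h t ht]
  obtain ⟨u, rfl | rfl⟩ := Nat.even_or_odd' s
  · -- the occurrence is aligned with the blocks `σ01 b`: read `y` off the odd positions
    refine ⟨a, m, u, fun t ht => ?_⟩
    rw [hodd (2 * t + 1) (by omega) (by ring)]
    congr 3
    push_cast
    ring
  · -- the zeros of `x` at even positions now sit at odd positions, forcing `11` into `V`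
    have hone (t : ℕ) (ht : t ≤ 1) : V[u + t]? = some 1 := by
      rw [hodd (2 * t) (by omega) (by ring), show 2 * i + ((2 * t : ℕ) : ℤ) = 2 * (i + t) by
        push_cast; ring, hev]
      rfl
    exact absurd (hone 1 le_rfl) (getElem?_iterate_substWord_σ01_succ_ne_one (hone 0 zero_le_one))

lemma forall_two_mul_eq_zero_iff {x : ℤ → Fin 2} (hx : x ∈ SubSubshift σ01) :
    (∀ k, x (2 * k) = 0) ↔ x 1 = 1 ∨ x 3 = 1 := by
  constructor
  · intro hev
    obtain ⟨y, hy, rfl⟩ := exists_sigSeq_eq_of_forall_two_mul_eq_zero hx hev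
    rw [show (1 : ℤ) = 2 * 0 + 1 by norm_num, show (3 : ℤ) = 2 * 1 + 1 by norm_num,
      sigSeq_two_mul_add_one, sigSeq_two_mul_add_one, fin_two_rev_eq_one_iff,
      fin_two_rev_eq_one_iff]
    by_contra! h
    have := even_sub_of_eq_one hy (a := 0) (b := 1) (by omega) (by omega)
    simp at this
  · intro h k
    by_contra hk
    have h2k : x (2 * k) = 1 := by omega
    rcases h with h | h
    · exact Int.not_even_iff_odd.2 ⟨-k, by ring⟩ (even_sub_of_eq_one hx h2k h)
    · exact Int.not_even_iff_odd.2 ⟨1 - k, by ring⟩ (even_sub_of_eq_one hx h2k h)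

def periodDoubling (n : ℤ) : Fin 2 := if Even (padicValInt 2 n) then 0 else 1

lemma periodDoubling_two_mul_add_one (k : ℤ) : periodDoubling (2 * k + 1) = 0 := by
  rw [periodDoubling, padicValInt.eq_zero_of_not_dvd (by omega), if_pos ⟨0, rfl⟩]

lemma periodDoubling_two_mul {k : ℤ} (hk : k ≠ 0) :
    periodDoubling (2 * k) = (periodDoubling k).rev := by
  have hval : padicValInt 2 (2 * k) = padicValInt 2 k + 1 := by
    simpa [mul_comm] using padicValInt_mul_eq_succ (p := 2) k hk
  simp only [periodDoubling, hval, Nat.even_add_one]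
  split_ifs <;> rfl

lemma getElem?_iterate_substWord_σ01 (k : ℕ) (a : Fin 2) {t : ℕ} (ht : t + 1 < 2 ^ k) :
    ((substWord σ01)^[k] [a])[t]? = some (periodDoubling (t + 1 : ℕ)) := by
  induction k generalizing t with
  | zero => simp at ht
  | succ k ih =>
    rw [iterate_succ_apply']
    obtain ⟨u, rfl | rfl⟩ := Nat.even_or_odd' t
    · have hu : u < ((substWord σ01)^[k] [a]).length := by
        rw [length_iterate_substWord_σ01, List.length_singleton, mul_one]
        rw [pow_succ] at ht
        omega
      rw [getElem?_substWord_σ01_two_mul, List.getElem?_eq_getElem hu, Nat.cast_add_one,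
        Nat.cast_mul, Nat.cast_two, periodDoubling_two_mul_add_one]
      rfl
    · rw [getElem?_substWord_σ01_two_mul_add_one, ih (by rw [pow_succ] at ht; omega),
        show ((2 * u + 1 + 1 : ℕ) : ℤ) = 2 * (u + 1 : ℕ) by push_cast; ring,
        periodDoubling_two_mul (by omega)]
      rfl

lemma padicValInt_two_pow_add {K : ℕ} {n : ℤ} (hn₀ : n ≠ 0) (hn : |n| < 2 ^ K) :
    padicValInt 2 (2 ^ K + n) = padicValInt 2 n := by
  have hlt : padicValInt 2 n < K := by
    have hdvd : 2 ^ padicValInt 2 n ≤ n.natAbs := by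
      simpa using Int.natAbs_le_of_dvd_ne_zero (padicValInt_dvd (p := 2) n) hn₀
    have hn' : n.natAbs < 2 ^ K := by rw [Int.abs_eq_natAbs] at hn; exact_mod_cast hn
    exact (Nat.pow_lt_pow_iff_right one_lt_two).1 (hdvd.trans_lt hn')
  have hsum : ((n + 2 ^ K : ℤ) : ℚ) ≠ 0 := by
    exact_mod_cast (show n + 2 ^ K ≠ 0 by rw [abs_lt] at hn; omega)
  have key := padicValRat.add_eq_of_lt (p := 2) (q := n) (r := 2 ^ K) (by exact_mod_cast hsum)
    (by exact_mod_cast hn₀) (by positivity)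
    (by rw [padicValRat.of_int, padicValRat.pow, show (2 : ℚ) = (2 : ℕ) by norm_num,
      padicValRat.self one_lt_two]; simpa using hlt)
  rw [← Int.cast_two, ← Int.cast_pow, ← Int.cast_add, padicValRat.of_int, padicValRat.of_int]
    at key
  rw [add_comm]
  exact_mod_cast key

-- `K` must be even because the junk value `padicValInt 2 0 = 0` is even.
lemma periodDoubling_two_pow_add {K : ℕ} (hK : Even K) {n : ℤ} (hn : |n| < 2 ^ K) :
    periodDoubling (2 ^ K + n) = periodDoubling n := by
  rcases eq_or_ne n 0 with rfl | hn₀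
  · simp [periodDoubling, padicValInt, Int.natAbs_pow, hK]
  · rw [periodDoubling, periodDoubling, padicValInt_two_pow_add hn₀ hn]

lemma periodDoubling_mem_SubSubshift : periodDoubling ∈ SubSubshift σ01 := by
  refine mem_SubSubshift_iff.2 fun i j hij => ?_
  obtain ⟨K, hK_even, hK⟩ : ∃ K : ℕ, Even K ∧ ((i.natAbs + j.natAbs : ℕ) : ℤ) < 2 ^ K :=
    ⟨2 * (i.natAbs + j.natAbs), even_two_mul _, by
      rw [pow_mul]; exact_mod_cast Nat.lt_pow_self (by norm_num)⟩
  have hcast : ((2 ^ K : ℕ) : ℤ) = 2 ^ K := by norm_num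
  refine ⟨0, K + 1, (2 ^ K + i - 1).toNat, fun t ht => ?_⟩
  rw [getElem?_iterate_substWord_σ01 _ _ (by rw [pow_succ]; omega),
    show (((2 ^ K + i - 1).toNat + t + 1 : ℕ) : ℤ) = 2 ^ K + (i + t) by omega,
    periodDoubling_two_pow_add hK_even (abs_lt.2 ⟨by omega, by omega⟩)]

lemma retTime_eq_of_forall_lt {α : Type*} {T : α → α} {A : Set α} {x : α} {n : ℕ} (hn : 0 < n)
    (hA : T^[n] x ∈ A) (hnot : ∀ m, 0 < m → m < n → T^[m] x ∉ A) : retTime T A x = n :=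
  le_antisymm (Nat.sInf_le ⟨hn, hA⟩)
    (le_csInf ⟨n, hn, hA⟩ fun m ⟨hm, hmA⟩ => not_lt.1 fun h => hnot m hm h hmA)

lemma Tmap_Tmap (m n : ℤ) (p : P3) : Tmap m (Tmap n p) = Tmap (n + m) p := by
  simp only [Tmap, Int.cast_add, add_assoc, add_comm m]

lemma Tmap_one_iterate (n : ℕ) (p : P3) : (Tmap 1)^[n] p = Tmap n p := by
  induction n with
  | zero => simp [Tmap]
  | succ n ih => rw [iterate_succ_apply', ih, Tmap_Tmap, Nat.cast_succ]

lemma Tmap_mem_Y3 {p : P3} (hp : p ∈ Y3) (n : ℤ) : Tmap n p ∈ Y3 :=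
  shift_mem_SubSubshift hp n

lemma mem_U3_iff {p : P3} : p ∈ U3 ↔ p ∈ Y3 ∧ ∀ k, p.1 (2 * k) = 0 := by
  constructor
  · rintro ⟨hp, x, -, hx⟩
    exact ⟨hp, fun k => by rw [← hx, sigSeq_two_mul]⟩
  · rintro ⟨hp, hev⟩
    obtain ⟨y, hy, hsig⟩ := exists_sigSeq_eq_of_forall_two_mul_eq_zero hp hev
    exact ⟨hp, y, hy, hsig⟩

lemma isClopen_U3 : IsClopen {y : Y3 | (y : P3) ∈ U3} := by
  have hset : {y : Y3 | (y : P3) ∈ U3} = (↑) ⁻¹' {p : P3 | p.1 1 = 1 ∨ p.1 3 = 1} := by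
    ext y
    change (y : P3) ∈ U3 ↔ _
    rw [mem_U3_iff, and_iff_right y.2]
    exact forall_two_mul_eq_zero_iff y.2
  have hcoord (n : ℤ) : IsClopen {p : P3 | p.1 n = 1} :=
    (isClopen_discrete {1}).preimage ((continuous_apply n).comp continuous_fst)
  rw [hset]
  exact ((hcoord 1).union (hcoord 3)).preimage continuous_subtype_val

lemma Tmap_two_mem_U3 {p : P3} (hp : p ∈ U3) : Tmap 2 p ∈ U3 := by
  rw [mem_U3_iff] at hp ⊢
  exact ⟨Tmap_mem_Y3 hp.1 2, fun k => by simpa [Tmap, mul_add] using hp.2 (k + 1)⟩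

lemma Tmap_one_notMem_U3 {p : P3} (hp : p ∈ U3) : Tmap 1 p ∉ U3 := by
  obtain ⟨-, x, hx, hsig⟩ := hp
  intro h
  have hx_one (k : ℤ) : x k = 1 := by
    have := (mem_U3_iff.1 h).2 k
    rw [Tmap, ← hsig] at this
    dsimp only at this
    rwa [sigSeq_two_mul_add_one, Fin.rev_eq_iff] at this
  exact Int.not_even_one (by simpa using even_sub_of_eq_one hx (hx_one 0) (hx_one 1))

lemma retTime_Tmap_one_U3 {p : P3} (hp : p ∈ U3) : retTime (Tmap 1) U3 p = 2 :=
  retTime_eq_of_forall_lt two_pos (by rw [Tmap_one_iterate]; exact Tmap_two_mem_U3 hp)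
    fun m hm hm2 => by
      obtain rfl : m = 1 := by omega
      exact Tmap_one_notMem_U3 hp

lemma continuous_sigSeq : Continuous sigSeq :=
  continuous_pi fun n => (continuous_of_discreteTopology (f := fun a : Fin 2 =>
    if Int.emod n 2 = 0 then 0 else if a = 0 then 1 else 0)).comp (continuous_apply (Int.ediv n 2))

lemma isUnit_two_padicInt_three : IsUnit (2 : ℤ_[3]) :=
  PadicInt.isUnit_iff.2 <| by
    simpa using (PadicInt.norm_natCast_eq_one_iff (p := 3) (n := 2)).2 (by norm_num)

lemma bijOn_φ3 : BijOn φ3 Y3 U3 := by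
  refine ⟨fun p hp => ⟨sigSeq_mem_SubSubshift hp, p.1, hp, rfl⟩, fun p _ q _ h => ?_,
    fun p ⟨_, x, hx, hsig⟩ => ?_⟩
  · exact Prod.ext (sigSeq_injective (congrArg Prod.fst h))
      (mul_left_cancel₀ two_ne_zero (congrArg Prod.snd h))
  · obtain ⟨u, hu⟩ := isUnit_two_padicInt_three
    refine ⟨(x, ↑u⁻¹ * p.2), hx, Prod.ext hsig ?_⟩
    simp [φ3, ← hu, ← mul_assoc]

lemma φ3_Tmap_one (p : P3) : φ3 (Tmap 1 p) = Tmap 2 (φ3 p) := by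
  refine Prod.ext (sigSeq_comp_shift p.1) ?_
  simp only [φ3, Tmap]
  push_cast
  ring

theorem stmt14 :
    IsClopen {y : Y3 | (y : P3) ∈ U3} ∧ U3.Nonempty ∧ U3 ≠ Y3 ∧
    (∀ p ∈ U3, retTime (Tmap 1) U3 p = 2) ∧
    (∀ p ∈ U3, (Tmap 1)^[retTime (Tmap 1) U3 p] p = Tmap 2 p) ∧
    Continuous φ3 ∧ Set.BijOn φ3 Y3 U3 ∧
    (∀ p ∈ Y3, φ3 (Tmap 1 p) = Tmap 2 (φ3 p)) := by
  have hp₀ : (sigSeq periodDoubling, (0 : ℤ_[3])) ∈ U3 :=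
    ⟨sigSeq_mem_SubSubshift periodDoubling_mem_SubSubshift, periodDoubling,
      periodDoubling_mem_SubSubshift, rfl⟩
  refine ⟨isClopen_U3, ⟨_, hp₀⟩, fun h => Tmap_one_notMem_U3 hp₀ (h ▸ Tmap_mem_Y3 hp₀.1 1),
    fun p => retTime_Tmap_one_U3, fun p hp => ?_,
    (continuous_sigSeq.comp continuous_fst).prodMk (continuous_const.mul continuous_snd),
    bijOn_φ3, fun p _ => φ3_Tmap_one p⟩
  rw [retTime_Tmap_one_U3 hp, Tmap_one_iterate]
  rfl
end

section
/- Let K be an alphabet space (compact zero-dimensional metric space with at least two points) and σ: K → K⁺ a generalized substitution (i.e., a ↦ |σ(a)| is continuous and each coordinate projection π_j ∘ σ is continuous on {a : |σ(a)| ≥ j}). Then the extension σ̂: K^ℤ → K^ℤ, sending (x_i) to the concatenation of the words σ(x_i) with σ(x_0) starting at position 0, is continuous. -/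
open Set Filter

/-- The shift by `n`: `(shiftZ n x) t = x (t + n)`. -/
def shiftZ {A : Type*} (n : ℤ) (x : ℤ → A) : ℤ → A := fun t => x (t + n)

section Gen

variable {K : Type*} [MetricSpace K] [CompactSpace K] [TotallyDisconnectedSpace K]
  [Nontrivial K] [Inhabited K]

/-- A generalized substitution: images are nonempty words, the length function is
continuous, and each coordinate projection is continuous where defined. -/
def IsGenSubst (σ : K → List K) : Prop :=
  (∀ a, σ a ≠ []) ∧ Continuous (fun a => (σ a).length) ∧
    ∀ j : ℕ, ContinuousOn (fun a => (σ a).getD j default) {a | j < (σ a).length}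

/-- Primitivity: for every nonempty open `V ⊆ K` there is `j` such that for every
letter `a` and every `k ≥ j`, some letter of `σᵏ(a)` lies in `V`. -/
def GPrimitive (σ : K → List K) : Prop :=
  ∀ V : Set K, IsOpen V → V.Nonempty →
    ∃ j : ℕ, ∀ a : K, ∀ k : ℕ, j ≤ k → ∃ c ∈ (substWord σ)^[k] [a], c ∈ V

/-- Starting position of the `i`-th block in the concatenation `… σ(x₋₁).σ(x₀)σ(x₁) …`. -/
def blockStart (σ : K → List K) (x : ℤ → K) : ℤ → ℤ := fun i =>
  if 0 ≤ i then (∑ t ∈ Finset.range i.toNat, ((σ (x t)).length : ℤ))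
  else -(∑ t ∈ Finset.range (-i).toNat, ((σ (x (-((t : ℤ) + 1)))).length : ℤ))

/-- `E` is the extension of `σ` to bi-infinite sequences: it maps `x` to the
concatenation of the words `σ(x_i)`, with `σ(x₀)` starting at position `0`. -/
def IsSubstExt (σ : K → List K) (E : (ℤ → K) → (ℤ → K)) : Prop :=
  ∀ (x : ℤ → K) (i : ℤ) (j : ℕ), j < (σ (x i)).length →
    E x (blockStart σ x i + j) = (σ (x i)).getD j default

/-- The language generated by a letter `a`: limits of subwords of the `σᵏ(a)`. -/
def GLang (σ : K → List K) (a : K) : Set (List K) :=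
  closure {w : List K | ∃ k : ℕ, w <:+: (substWord σ)^[k] [a]}

/-- The generalized substitution subshift. -/
def GXsub (σ : K → List K) : Set (ℤ → K) :=
  {x | ∀ i j : ℤ, i ≤ j → window x i j ∈ ⋃ a : K, GLang σ a}

end Gen


set_option linter.unusedSectionVars false

section Aux

variable {K : Type*} [MetricSpace K] [CompactSpace K] [TotallyDisconnectedSpace K]
  [Nontrivial K] [Inhabited K]

lemma blockStart_succ (σ : K → List K) (x : ℤ → K) (i : ℤ) :
    blockStart σ x (i + 1) = blockStart σ x i + (σ (x i)).length := by
  rcases le_or_gt 0 i with hi | hi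
  · have h1 : (0:ℤ) ≤ i + 1 := by omega
    simp only [blockStart, if_pos hi, if_pos h1]
    have h2 : (i+1).toNat = i.toNat + 1 := by omega
    rw [h2, Finset.sum_range_succ, Int.toNat_of_nonneg hi]
  · rcases eq_or_lt_of_le (by omega : i + 1 ≤ 0) with h0 | h0
    · have hi1 : i = -1 := by omega
      subst hi1
      simp only [blockStart]
      norm_num
    · have hni : ¬ (0:ℤ) ≤ i := by omega
      have hni1 : ¬ (0:ℤ) ≤ i + 1 := by omega
      simp only [blockStart, if_neg hni, if_neg hni1]
      have h2 : (-i).toNat = (-(i+1)).toNat + 1 := by omega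
      rw [h2, Finset.sum_range_succ]
      have h3 : -(((-(i+1)).toNat : ℤ) + 1) = i := by omega
      rw [h3]
      ring

lemma exists_block (σ : K → List K) (x : ℤ → K) (hpos : ∀ a, 0 < (σ a).length) (m : ℤ) :
    ∃ i : ℤ, blockStart σ x i ≤ m ∧ m < blockStart σ x (i + 1) := by
  have hstep : ∀ i : ℤ, blockStart σ x i + 1 ≤ blockStart σ x (i + 1) := by
    intro i
    have := blockStart_succ σ x i
    have := hpos (x i)
    omega
  -- starting point
  obtain ⟨i0, hi0⟩ : ∃ i0 : ℤ, blockStart σ x i0 ≤ m := by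
    rcases le_or_gt 0 m with hm | hm
    · refine ⟨0, ?_⟩
      simp only [blockStart]
      norm_num
      omega
    · refine ⟨m, ?_⟩
      have hnm : ¬ (0:ℤ) ≤ m := by omega
      simp only [blockStart, if_neg hnm]
      have hsum : ((-m).toNat : ℤ) ≤ ∑ t ∈ Finset.range (-m).toNat,
          ((σ (x (-((t : ℤ) + 1)))).length : ℤ) := by
        calc ((-m).toNat : ℤ) = ∑ _t ∈ Finset.range (-m).toNat, (1:ℤ) := by simp
        _ ≤ _ := Finset.sum_le_sum (fun t _ => by exact_mod_cast hpos _)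
      omega
  -- induction
  have main : ∀ n : ℕ, ∀ i : ℤ, blockStart σ x i ≤ m → m < blockStart σ x i + n + 1 →
      ∃ i' : ℤ, blockStart σ x i' ≤ m ∧ m < blockStart σ x (i' + 1) := by
    intro n
    induction n with
    | zero =>
      intro i h1 h2
      exact ⟨i, h1, by have := hstep i; omega⟩
    | succ n ih =>
      intro i h1 h2
      rcases lt_or_ge m (blockStart σ x (i + 1)) with h | h
      · exact ⟨i, h1, h⟩
      · exact ih (i + 1) h (by have := hstep i; omega)
  exact main (m - blockStart σ x i0).toNat i0 hi0 (by omega)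

lemma blockStart_congr (σ : K → List K) (x y : ℤ → K) (i : ℤ)
    (h : ∀ t : ℤ, min i 0 ≤ t → t ≤ max i 0 → (σ (y t)).length = (σ (x t)).length) :
    blockStart σ y i = blockStart σ x i := by
  rcases le_or_gt 0 i with hi | hi
  · simp only [blockStart, if_pos hi]
    refine Finset.sum_congr rfl (fun t ht => ?_)
    rw [Finset.mem_range] at ht
    have ht' : (t : ℤ) < i := by omega
    rw [h t (by omega) (by omega)]
  · have hni : ¬ (0:ℤ) ≤ i := by omega
    simp only [blockStart, if_neg hni]
    congr 1
    refine Finset.sum_congr rfl (fun t ht => ?_)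
    rw [Finset.mem_range] at ht
    have ht' : (t : ℤ) < -i := by omega
    rw [h (-((t:ℤ)+1)) (by omega) (by omega)]

end Aux

theorem stmt15 {K : Type*} [MetricSpace K] [CompactSpace K]
    [TotallyDisconnectedSpace K] [Nontrivial K] [Inhabited K]
    (σ : K → List K) (hσ : IsGenSubst σ)
    (E : (ℤ → K) → (ℤ → K)) (hE : IsSubstExt σ E) :
    Continuous E := by
  obtain ⟨hne, hlen, hproj⟩ := hσ
  have hpos : ∀ a, 0 < (σ a).length := fun a => List.length_pos_iff.mpr (hne a)
  rw [continuous_pi_iff]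
  intro m
  rw [continuous_iff_continuousAt]
  intro x
  obtain ⟨i, hb1, hb2⟩ := exists_block σ x hpos m
  set S : Finset ℤ := Finset.Icc (min i 0 - 1) (max i 0 + 1) with hS
  set U : Set (ℤ → K) := {y | ∀ t ∈ S, (σ (y t)).length = (σ (x t)).length} with hU
  have hUopen : IsOpen U := by
    have hrw : U = ⋂ t ∈ S, {y : ℤ → K | (σ (y t)).length = (σ (x t)).length} := by
      ext y; simp [hU, Set.mem_iInter]
    rw [hrw]
    refine isOpen_biInter_finset (fun t _ => ?_)
    exact IsOpen.preimage (hlen.comp (continuous_apply t))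
      (isOpen_discrete {(σ (x t)).length})
  have hxU : x ∈ U := fun t _ => rfl
  have hiS : i ∈ S := by simp only [hS, Finset.mem_Icc]; omega
  set j : ℕ := (m - blockStart σ x i).toNat with hj
  have hjeq : (j : ℤ) = m - blockStart σ x i := Int.toNat_of_nonneg (by omega)
  have hsucc := blockStart_succ σ x i
  have hjlt : j < (σ (x i)).length := by omega
  have hEy : ∀ y ∈ U, E y m = (σ (y i)).getD j default := by
    intro y hy
    have h1 : blockStart σ y i = blockStart σ x i := by
      refine blockStart_congr σ x y i (fun t h1 h2 => hy t ?_)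
      simp [hS]; omega
    have h2 : (σ (y i)).length = (σ (x i)).length := hy i hiS
    have h3 := hE y i j (by omega)
    rw [h1] at h3
    rw [← h3]
    congr 1
    omega
  have hUsub : U ⊆ {y : ℤ → K | j < (σ (y i)).length} := by
    intro y hy
    have h2 : (σ (y i)).length = (σ (x i)).length := hy i hiS
    simp only [Set.mem_setOf_eq]
    omega
  have hg : ContinuousOn (fun y : ℤ → K => (σ (y i)).getD j default)
      {y : ℤ → K | j < (σ (y i)).length} :=
    ContinuousOn.comp (hproj j) (continuous_apply i).continuousOn (fun y hy => hy)
  have hgx : ContinuousAt (fun y : ℤ → K => (σ (y i)).getD j default) x :=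
    (hg.mono hUsub).continuousAt (hUopen.mem_nhds hxU)
  exact hgx.congr (Filter.eventuallyEq_of_mem (hUopen.mem_nhds hxU)
    (fun y hy => (hEy y hy).symm))
end

section
/- Let K be an alphabet space and σ: K → K⁺ a primitive generalized substitution. Then for every letter a ∈ K, |σⁿ(a)| → ∞ as n → ∞. -/
open Set Filter

/-! Separate two distinct letters by disjoint open sets `U` and `V`. By primitivity there is `j`
such that every `σᵏ(c)` with `k ≥ j` meets both `U` and `V`, so has length at least `2`. Since `σ`
acts on words letter by letter, `σʲ` at least doubles lengths, hence `|σⁿ(a)| ≥ 2ᵐ⁺¹` as soon as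
`n ≥ j (m + 1)`. -/

section SubstWord

variable {A : Type*} (σ : A → List A)

lemma substWord_append (w₁ w₂ : List A) :
    substWord σ (w₁ ++ w₂) = substWord σ w₁ ++ substWord σ w₂ := by
  induction w₁ with
  | nil => rfl
  | cons a w ih =>
    show σ a ++ substWord σ (w ++ w₂) = σ a ++ substWord σ w ++ substWord σ w₂
    rw [ih, List.append_assoc]

lemma iterate_substWord_append (k : ℕ) (w₁ w₂ : List A) :
    (substWord σ)^[k] (w₁ ++ w₂) = (substWord σ)^[k] w₁ ++ (substWord σ)^[k] w₂ := by
  induction k generalizing w₁ w₂ with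
  | zero => rfl
  | succ k ih => simp only [Function.iterate_succ_apply, substWord_append, ih]

variable {σ}

lemma mul_length_le_length_iterate_substWord {k m : ℕ}
    (h : ∀ c, m ≤ ((substWord σ)^[k] [c]).length) (w : List A) :
    m * w.length ≤ ((substWord σ)^[k] w).length := by
  induction w with
  | nil => simp
  | cons c w ih =>
    rw [← List.singleton_append, iterate_substWord_append, List.length_append, List.length_append,
      List.length_singleton, mul_add, mul_one]
    exact add_le_add (h c) ih

lemma two_pow_mul_length_le_length_iterate_substWord {j : ℕ}
    (h : ∀ k ≥ j, ∀ c, 2 ≤ ((substWord σ)^[k] [c]).length) (m : ℕ) :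
    ∀ n ≥ j * (m + 1), ∀ w : List A, 2 ^ (m + 1) * w.length ≤ ((substWord σ)^[n] w).length := by
  induction m with
  | zero =>
    intro n hn w
    simpa using mul_length_le_length_iterate_substWord (h n (by simpa using hn)) w
  | succ m ih =>
    intro n hn w
    obtain ⟨n', rfl⟩ := Nat.exists_eq_add_of_le' (show j ≤ n by nlinarith)
    rw [Function.iterate_add_apply]
    calc 2 ^ (m + 1 + 1) * w.length = 2 ^ (m + 1) * (2 * w.length) := by ring
      _ ≤ 2 ^ (m + 1) * ((substWord σ)^[j] w).length :=
        Nat.mul_le_mul_left _ (mul_length_le_length_iterate_substWord (h j le_rfl) w)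
      _ ≤ _ := ih n' (by nlinarith) _

lemma tendsto_length_iterate_substWord {j : ℕ}
    (h : ∀ k ≥ j, ∀ c, 2 ≤ ((substWord σ)^[k] [c]).length) (a : A) :
    Tendsto (fun n : ℕ => ((substWord σ)^[n] [a]).length) atTop atTop := by
  refine tendsto_atTop.2 fun b => eventually_atTop.2 ⟨j * (b + 1), fun n hn => ?_⟩
  calc b ≤ 2 ^ (b + 1) := (Nat.le_succ b).trans Nat.lt_two_pow_self.le
    _ = 2 ^ (b + 1) * [a].length := by simp
    _ ≤ _ := two_pow_mul_length_le_length_iterate_substWord h b n hn [a]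

end SubstWord

lemma List.two_le_length_of_mem_of_ne {α : Type*} {l : List α} {x y : α}
    (hx : x ∈ l) (hy : y ∈ l) (hxy : x ≠ y) : 2 ≤ l.length := by
  classical
  exact (Finset.one_lt_card.2 ⟨x, List.mem_toFinset.2 hx, y, List.mem_toFinset.2 hy, hxy⟩).trans_le
    (List.toFinset_card_le l)

lemma GPrimitive.exists_two_le_length_iterate {K : Type*} [MetricSpace K] [Nontrivial K]
    {σ : K → List K} (hprim : GPrimitive σ) :
    ∃ j, ∀ k ≥ j, ∀ c, 2 ≤ ((substWord σ)^[k] [c]).length := by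
  obtain ⟨p, q, hpq⟩ := exists_pair_ne K
  obtain ⟨U, V, hU, hV, hpU, hqV, hUV⟩ := t2_separation hpq
  obtain ⟨jU, hjU⟩ := hprim U hU ⟨p, hpU⟩
  obtain ⟨jV, hjV⟩ := hprim V hV ⟨q, hqV⟩
  refine ⟨max jU jV, fun k hk c => ?_⟩
  obtain ⟨u, hu, huU⟩ := hjU c k (le_of_max_le_left hk)
  obtain ⟨v, hv, hvV⟩ := hjV c k (le_of_max_le_right hk)
  exact List.two_le_length_of_mem_of_ne hu hv (hUV.ne_of_mem huU hvV)

theorem stmt16_general {K : Type*} [MetricSpace K] [Nontrivial K]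
    (σ : K → List K) (hprim : GPrimitive σ) :
    ∀ a : K, Tendsto (fun n : ℕ => ((substWord σ)^[n] [a]).length) atTop atTop := by
  obtain ⟨j, hj⟩ := hprim.exists_two_le_length_iterate
  exact tendsto_length_iterate_substWord hj

theorem stmt16 {K : Type*} [MetricSpace K] [CompactSpace K]
    [TotallyDisconnectedSpace K] [Nontrivial K] [Inhabited K]
    (σ : K → List K) (hσ : IsGenSubst σ) (hprim : GPrimitive σ) :
    ∀ a : K, Tendsto (fun n : ℕ => ((substWord σ)^[n] [a]).length) atTop atTop :=
  stmt16_general σ hprim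
end

section
/- Let K be an alphabet space and σ: K → K⁺ a primitive generalized substitution. Then for any two letters a, b ∈ K, the languages coincide: L(σ,a) = L(σ,b). -/
open Set Filter

/-!
By primitivity every letter `a` is a limit of letters `c` occurring in the words `σʲ(b)`.
Continuity of `σ` makes `c ↦ σᵏ(c)` continuous, so every subword of `σᵏ(a)` is a limit of
subwords of such `σᵏ(c)`, and these are subwords of `σᵏ⁺ʲ(b)`.
-/

open Topology

namespace List
variable {α : Type*} [TopologicalSpace α]

theorem nhds_cons_eq_map (a : α) (l : List α) :
    𝓝 (a :: l) = Filter.map (fun p : α × List α => p.1 :: p.2) (𝓝 (a, l)) := by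
  rw [nhds_prod_eq, nhds_cons, Filter.map_prod]; rfl

theorem continuous_append : Continuous fun p : List α × List α => p.1 ++ p.2 := by
  refine continuous_iff_continuousAt.2 fun ⟨l₁, l₂⟩ => ?_
  induction l₁ with
  | nil =>
    rw [ContinuousAt, nhds_prod_eq, nhds_nil, pure_prod, tendsto_map'_iff]
    exact tendsto_id
  | cons a l ih =>
    rw [ContinuousAt, nhds_prod_eq, nhds_cons_eq_map, ← Filter.map_id (f := 𝓝 l₂), prod_map_map_eq,
      ← nhds_prod_eq, tendsto_map'_iff]
    simp only [Function.comp_def, id, cons_append]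
    have htail : ContinuousAt (fun q : (α × List α) × List α => q.1.2 ++ q.2) ((a, l), l₂) :=
      ih.comp_of_eq (continuous_fst.snd.prodMk continuous_snd).continuousAt rfl
    exact (continuous_fst.fst.tendsto _).cons htail

theorem continuous_take (n : ℕ) : Continuous fun l : List α => l.take n := by
  refine continuous_iff_continuousAt.2 fun l => ?_
  induction l generalizing n with
  | nil => exact tendsto_nhds_of_eventually_eq (by simp [nhds_nil])
  | cons a l ih =>
    cases n with
    | zero => simp only [take_zero]; exact continuousAt_const
    | succ n =>
      rw [ContinuousAt, nhds_cons_eq_map, tendsto_map'_iff]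
      simp only [Function.comp_def, take_succ_cons]
      exact (continuous_fst.tendsto _).cons (Tendsto.comp (ih n) (continuous_snd.tendsto _))

theorem continuous_drop (n : ℕ) : Continuous fun l : List α => l.drop n := by
  refine continuous_iff_continuousAt.2 fun l => ?_
  induction l generalizing n with
  | nil => exact tendsto_nhds_of_eventually_eq (by simp [nhds_nil])
  | cons a l ih =>
    cases n with
    | zero => exact continuousAt_id
    | succ n =>
      rw [ContinuousAt, nhds_cons_eq_map, tendsto_map'_iff]
      simp only [Function.comp_def, drop_succ_cons]
      exact Tendsto.comp (ih n) (continuous_snd.tendsto _)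

theorem continuous_ofFn : ∀ n : ℕ, Continuous fun f : Fin n → α => ofFn f
  | 0 => by simpa using continuous_const
  | n + 1 => by
    simp only [ofFn_succ]
    exact continuous_cons.comp ((continuous_apply 0).prodMk
      ((continuous_ofFn n).comp (continuous_pi fun i => continuous_apply i.succ)))

end List

section Substitution

variable {A : Type*}

theorem substWord_eq_flatMap (σ : A → List A) (w : List A) : substWord σ w = w.flatMap σ := by
  induction w with
  | nil => rfl
  | cons a w ih => simp [substWord, List.flatMap_cons, ← ih]

theorem List.IsInfix.substWord_iterate (σ : A → List A) (k : ℕ) {v w : List A} (h : v <:+: w) :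
    (substWord σ)^[k] v <:+: (substWord σ)^[k] w := by
  induction k generalizing v w with
  | zero => exact h
  | succ k ih =>
    simp only [Function.iterate_succ_apply, substWord_eq_flatMap]
    exact ih (h.flatMap σ)

theorem iterate_infix_of_mem_iterate (σ : A → List A) (k : ℕ) {b c : A} {j : ℕ}
    (hc : c ∈ (substWord σ)^[j] [b]) :
    (substWord σ)^[k] [c] <:+: (substWord σ)^[k + j] [b] := by
  rw [Function.iterate_add_apply]
  exact ((List.singleton_infix_iff c _).2 hc).substWord_iterate σ k

variable [TopologicalSpace A]

theorem continuous_substWord {σ : A → List A} (hσ : Continuous σ) : Continuous (substWord σ) := by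
  refine continuous_iff_continuousAt.2 fun w => ?_
  induction w with
  | nil => exact tendsto_nhds_of_eventually_eq (by simp [nhds_nil, substWord])
  | cons a w ih =>
    rw [ContinuousAt, List.nhds_cons_eq_map, tendsto_map'_iff]
    have hpair : ContinuousAt (fun p : A × List A => (σ p.1, substWord σ p.2)) (a, w) :=
      (hσ.comp continuous_fst).continuousAt.prodMk (ih.comp_of_eq continuous_snd.continuousAt rfl)
    exact List.continuous_append.continuousAt.comp_of_eq hpair rfl

theorem continuous_substWord_iterate_singleton {σ : A → List A} (hσ : Continuous σ) (k : ℕ) :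
    Continuous fun a : A => (substWord σ)^[k] [a] :=
  ((continuous_substWord hσ).iterate k).comp
    (List.continuous_cons.comp (continuous_id.prodMk continuous_const))

end Substitution

theorem mem_closure_setOf_infix {X α : Type*} [TopologicalSpace X] [TopologicalSpace α]
    {f : X → List α} (hf : Continuous f) {T : Set X} {x : X} (hx : x ∈ closure T) {w : List α}
    (hw : w <:+: f x) : w ∈ closure {v | ∃ y ∈ T, v <:+: f y} := by
  obtain ⟨u, v, huwv⟩ := hw
  let g : X → List α := fun y => ((f y).drop u.length).take w.length
  have hg : Continuous g := (List.continuous_take _).comp ((List.continuous_drop _).comp hf)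
  have hgx : g x = w := by simp [g, ← huwv]
  refine closure_mono ?_ (hgx ▸ image_closure_subset_closure_image hg ⟨x, hx, rfl⟩)
  rintro _ ⟨y, hy, rfl⟩
  exact ⟨y, hy, (List.take_prefix _ _).isInfix.trans (List.drop_suffix _ _).isInfix⟩

section GeneralizedSubstitution

variable {K : Type*} [MetricSpace K]

/-- Near `a` the length of `σ x` is constant, so there `σ` is `List.ofFn` of its coordinates. -/
theorem IsGenSubst.continuous [Inhabited K] {σ : K → List K} (hσ : IsGenSubst σ) :
    Continuous σ := by
  refine continuous_iff_continuousAt.2 fun a => ?_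
  set n := (σ a).length
  have hlen : ∀ᶠ x in 𝓝 a, (σ x).length = n :=
    (isOpen_discrete {n}).preimage hσ.2.1 |>.mem_nhds rfl
  have hcoord : ContinuousAt (fun x (i : Fin n) => (σ x).getD i default) a :=
    continuousAt_pi.2 fun i => (hσ.2.2 i).continuousAt <|
      (isOpen_discrete {m | i < m}).preimage hσ.2.1 |>.mem_nhds i.2
  refine ((List.continuous_ofFn n).continuousAt.comp hcoord).congr ?_
  filter_upwards [hlen] with x hx
  refine List.ext_getElem (by simp [hx]) fun i h₁ h₂ => ?_
  simp [List.getElem?_eq_getElem h₂]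

theorem GPrimitive.mem_closure_iterate {σ : K → List K} (hprim : GPrimitive σ) (a b : K) :
    a ∈ closure {c | ∃ j, c ∈ (substWord σ)^[j] [b]} := by
  refine mem_closure_iff.2 fun V hV haV => ?_
  obtain ⟨j, hj⟩ := hprim V hV ⟨a, haV⟩
  obtain ⟨c, hc, hcV⟩ := hj b j le_rfl
  exact ⟨c, hcV, j, hc⟩

theorem GLang_subset [Inhabited K] {σ : K → List K} (hσ : IsGenSubst σ) (hprim : GPrimitive σ)
    (a b : K) : GLang σ a ⊆ GLang σ b := by
  refine closure_minimal ?_ isClosed_closure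
  rintro w ⟨k, hw⟩
  refine closure_mono ?_ (mem_closure_setOf_infix
    (continuous_substWord_iterate_singleton hσ.continuous k) (hprim.mem_closure_iterate a b) hw)
  rintro v ⟨c, ⟨j, hc⟩, hv⟩
  exact ⟨k + j, hv.trans (iterate_infix_of_mem_iterate σ k hc)⟩

end GeneralizedSubstitution

theorem stmt17_general {K : Type*} [MetricSpace K] [Inhabited K]
    (σ : K → List K) (hσ : IsGenSubst σ) (hprim : GPrimitive σ) :
    ∀ a b : K, GLang σ a = GLang σ b :=
  fun a b => (GLang_subset hσ hprim a b).antisymm (GLang_subset hσ hprim b a)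

theorem stmt17 {K : Type*} [MetricSpace K] [CompactSpace K]
    [TotallyDisconnectedSpace K] [Nontrivial K] [Inhabited K]
    (σ : K → List K) (hσ : IsGenSubst σ) (hprim : GPrimitive σ) :
    ∀ a b : K, GLang σ a = GLang σ b :=
  stmt17_general σ hσ hprim
end
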